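/- arXiv:1408.1923 — 7 statements merged into one kernel-verified Lean document; each statement's English description precedes it below -/
import Mathlib

section
/- Let h : [0,T] → ℝ be continuous with 0 < E₁ ≤ h(t) ≤ E₂ for all t ∈ [0,T]. Then for every real k < 0 and every integer n ≥ 1, one has (Φ(n,h))^k ≤ E₁^k · n^{−2k} · D₂^{−k} · (1 − e^{−D₁T})^k. -/
/-!
Since `a ≤ D₂`, `B(t) = -∫ₜᵀ a ≥ -D₂ (T - t)`, so with `c = n² D₂` the integrand of `Φ(n,h)`
dominates `E₁ e^{c(t - T)}`, whose integral is `E₁ (1 - e^{-cT}) / c ≥ E₁ (1 - e^{-D₁T}) / c > 0`.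
Raising to the negative power `k` reverses this inequality, and expanding `c^k` gives the bound.
-/

open Real Set intervalIntegral MeasureTheory

lemma integral_exp_mul_sub_mul {c : ℝ} (hc : c ≠ 0) (T : ℝ) :
    ∫ t in (0:ℝ)..T, exp (c * t - c * T) = (1 - exp (-c * T)) / c := by
  rw [integral_comp_mul_sub (f := exp) hc, integral_exp, smul_eq_mul, sub_self, mul_zero,
    zero_sub, exp_zero, neg_mul, inv_mul_eq_div]

lemma continuousOn_primitive_Icc {a : ℝ → ℝ} {T : ℝ} (hT : 0 ≤ T)
    (ha : ContinuousOn a (Icc 0 T)) :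
    ContinuousOn (fun t ↦ ∫ s in (0:ℝ)..t, a s) (Icc 0 T) := by
  rw [← uIcc_of_le hT] at ha ⊢
  exact continuousOn_primitive_interval ha.integrableOn_uIcc

lemma neg_mul_sub_le_integral_sub_integral {a : ℝ → ℝ} {D T t : ℝ}
    (ha : IntervalIntegrable a volume 0 T) (ht : t ∈ Icc 0 T) (haD : ∀ s ∈ Icc t T, a s ≤ D) :
    -(D * (T - t)) ≤ (∫ s in (0:ℝ)..t, a s) - ∫ s in (0:ℝ)..T, a s := by
  have ha₀ : IntervalIntegrable a volume 0 t :=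
    ha.mono_set (by rw [uIcc_of_le ht.1, uIcc_of_le (ht.1.trans ht.2)]; gcongr; exact ht.2)
  have hle : ∫ s in t..T, a s ≤ ∫ _ in t..T, D :=
    integral_mono_on ht.2 (ha₀.symm.trans ha) intervalIntegrable_const haD
  rw [intervalIntegral.integral_const, smul_eq_mul] at hle
  rw [integral_interval_sub_left ha₀ ha, integral_symm]
  linarith

lemma div_le_integral_exp_mul {φ h : ℝ → ℝ} {T c E : ℝ} (hT : 0 ≤ T) (hc : 0 < c) (hE : 0 ≤ E)
    (hφ : ContinuousOn φ (Icc 0 T)) (hh : ContinuousOn h (Icc 0 T))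
    (hφc : ∀ t ∈ Icc 0 T, c * t - c * T ≤ φ t) (hhE : ∀ t ∈ Icc 0 T, E ≤ h t) :
    E * (1 - exp (-c * T)) / c ≤ ∫ t in (0:ℝ)..T, exp (φ t) * h t := by
  have hint : IntervalIntegrable (fun t ↦ exp (φ t) * h t) volume 0 T :=
    ((continuous_exp.comp_continuousOn hφ).mul hh).intervalIntegrable_of_Icc hT
  calc E * (1 - exp (-c * T)) / c = ∫ t in (0:ℝ)..T, exp (c * t - c * T) * E := by
        rw [intervalIntegral.integral_mul_const, integral_exp_mul_sub_mul hc.ne']; ring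
    _ ≤ ∫ t in (0:ℝ)..T, exp (φ t) * h t :=
        integral_mono_on hT ((by fun_prop : Continuous _).intervalIntegrable _ _) hint fun t ht ↦
          mul_le_mul (exp_le_exp.2 (hφc t ht)) (hhE t ht) hE (exp_pos _).le

lemma rpow_mul_div_sq_mul {x y n D : ℝ} (k : ℝ) (hx : 0 ≤ x) (hy : 0 ≤ y) (hn : 0 ≤ n)
    (hD : 0 ≤ D) : (x * y / (n ^ 2 * D)) ^ k = x ^ k * n ^ (-(2 * k)) * D ^ (-k) * y ^ k := by
  rw [div_eq_mul_inv, mul_rpow (by positivity) (by positivity), mul_rpow hx hy,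
    ← rpow_neg_one, ← rpow_mul (by positivity), mul_rpow (by positivity) hD,
    ← rpow_natCast n 2, ← rpow_mul hn]
  push_cast
  ring_nf

/-- For continuous `h` with `0 < E₁ ≤ h ≤ E₂` on `[0,T]`, for every real `k < 0`
and integer `n ≥ 1`, `(Φ(n,h))^k ≤ E₁^k · n^{-2k} · D₂^{-k} · (1 - e^{-D₁T})^k`. -/
theorem stmt_1
    (T D₁ D₂ E₁ E₂ : ℝ) (hT : 0 < T) (hD₁ : 0 < D₁) (hD₁₂ : D₁ ≤ D₂)
    (a : ℝ → ℝ) (ha : ContinuousOn a (Set.Icc 0 T))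
    (haB : ∀ t ∈ Set.Icc 0 T, D₁ ≤ a t ∧ a t ≤ D₂)
    (A Bf : ℝ → ℝ) (hA : ∀ t, A t = ∫ s in (0:ℝ)..t, a s)
    (hBf : ∀ t, Bf t = A t - A T)
    (Φ : ℕ → (ℝ → ℝ) → ℝ)
    (hΦ : ∀ (n : ℕ) (h : ℝ → ℝ), Φ n h = ∫ t in (0:ℝ)..T, Real.exp ((n:ℝ)^2 * Bf t) * h t)
    (h : ℝ → ℝ) (hhc : ContinuousOn h (Set.Icc 0 T))
    (hE₁ : 0 < E₁)
    (hhB : ∀ t ∈ Set.Icc 0 T, E₁ ≤ h t ∧ h t ≤ E₂)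
    (k : ℝ) (hk : k < 0) (n : ℕ) (hn : 1 ≤ n) :
    (Φ n h) ^ k ≤
      E₁ ^ k * (n:ℝ) ^ (-(2*k)) * D₂ ^ (-k) * (1 - Real.exp (-D₁ * T)) ^ k := by
  have hD₂ : 0 < D₂ := hD₁.trans_le hD₁₂
  have hn₁ : (1:ℝ) ≤ n := by exact_mod_cast hn
  set c := (n:ℝ) ^ 2 * D₂
  have hD₁c : D₁ ≤ c := hD₁₂.trans (le_mul_of_one_le_left hD₂.le (one_le_pow₀ hn₁))
  have hBf_eq : ∀ t, Bf t = (∫ s in (0:ℝ)..t, a s) - ∫ s in (0:ℝ)..T, a s := fun t ↦ by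
    rw [hBf, hA, hA]
  have hBf_cont : ContinuousOn Bf (Icc 0 T) :=
    ((continuousOn_primitive_Icc hT.le ha).sub continuousOn_const).congr fun t _ ↦ hBf_eq t
  have hBf_ge : ∀ t ∈ Icc 0 T, c * t - c * T ≤ (n:ℝ) ^ 2 * Bf t := fun t ht ↦ by
    have hB := neg_mul_sub_le_integral_sub_integral (ha.intervalIntegrable_of_Icc hT.le) ht
      fun s hs ↦ (haB s ⟨ht.1.trans hs.1, hs.2⟩).2
    calc c * t - c * T = (n:ℝ) ^ 2 * -(D₂ * (T - t)) := by ring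
      _ ≤ (n:ℝ) ^ 2 * Bf t := by rw [hBf_eq]; gcongr
  have hgap : 0 < 1 - exp (-D₁ * T) := sub_pos.2 (exp_lt_one_iff.2 (by nlinarith))
  have hΦ_ge : E₁ * (1 - exp (-D₁ * T)) / c ≤ Φ n h := by
    rw [hΦ]
    refine le_trans ?_ (div_le_integral_exp_mul hT.le (by positivity) hE₁.le
      (continuousOn_const.mul hBf_cont) hhc hBf_ge fun t ht ↦ (hhB t ht).1)
    gcongr
  calc Φ n h ^ k ≤ (E₁ * (1 - exp (-D₁ * T)) / c) ^ k :=
        rpow_le_rpow_of_nonpos (by positivity) hΦ_ge hk.le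
    _ = _ := rpow_mul_div_sq_mul k hE₁.le hgap.le (Nat.cast_nonneg n) hD₂.le
end

section
/- Let k ≥ 0 and M ≥ 0. Let (g_n)_{n≥1} be a square-summable real sequence and define f_n = (Φ(n,φ))^{−1} g_n for all n ≥ 1. If Σ_{n≥1} (1+n²)^k f_n² ≤ M², then ‖f‖ ≤ (D₂ / (B₁(1 − e^{−D₁T})))^{k/(k+2)} · M^{2/(k+2)} · ‖g‖^{k/(k+2)}. -/
/-!
On `[0, T]` we have `B(t) ≥ D₂ (t - T)`, hence
`Φ(n, φ) ≥ B₁ ∫₀ᵀ e^{n² D₂ (t - T)} dt ≥ B₁ (1 - e^{-D₁ T}) / (n² D₂)`, i.e. `|f_n| ≤ C n² |g_n|`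
with `C = D₂ / (B₁ (1 - e^{-D₁ T}))`. Hölder's inequality with exponents `(k + 2) / 2` and
`(k + 2) / k` bounds `Σ f_n²` by `(Σ w_n^k f_n²)^{2/(k+2)} (Σ w_n^{-2} f_n²)^{k/(k+2)}` with
`w_n = 1 + n²`; the first sum is at most `M²`, the second at most `C² ‖g‖²` since
`w_n^{-2} ≤ n^{-4}`.
-/

open Real Set intervalIntegral

theorem tsum_rpow_mul_rpow_le {ι : Type*} {u v : ι → ℝ} {θ : ℝ} (hθ₀ : 0 < θ) (hθ₁ : θ ≤ 1)
    (hu : ∀ i, 0 ≤ u i) (hv : ∀ i, 0 ≤ v i) (hu_sum : Summable u) (hv_sum : Summable v) :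
    ∑' i, u i ^ θ * v i ^ (1 - θ) ≤ (∑' i, u i) ^ θ * (∑' i, v i) ^ (1 - θ) := by
  rcases hθ₁.eq_or_lt with rfl | hθ₁
  · simp
  have hθ' : 0 < 1 - θ := by linarith
  have holder := inner_le_Lp_mul_Lq_tsum_of_nonneg (HolderConjugate.inv_one_sub_inv hθ₀ hθ₁)
    (fun i => rpow_nonneg (hu i) θ) (fun i => rpow_nonneg (hv i) (1 - θ))
    (f := fun i => u i ^ θ) (g := fun i => v i ^ (1 - θ))
  simp only [← rpow_mul (hu _), ← rpow_mul (hv _), mul_inv_cancel₀ hθ₀.ne',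
    mul_inv_cancel₀ hθ'.ne', rpow_one, one_div, inv_inv] at holder
  exact holder hu_sum hv_sum

theorem mul_rpow_mul_rpow_one_sub {w x : ℝ} (hw : 0 < w) (hx : 0 ≤ x) (s t θ : ℝ) :
    (w ^ s * x) ^ θ * (w ^ t * x) ^ (1 - θ) = w ^ (s * θ + t * (1 - θ)) * x := by
  rw [mul_rpow (rpow_nonneg hw.le _) hx, mul_rpow (rpow_nonneg hw.le _) hx,
    ← rpow_mul hw.le, ← rpow_mul hw.le, rpow_add hw]
  calc w ^ (s * θ) * x ^ θ * (w ^ (t * (1 - θ)) * x ^ (1 - θ))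
      = w ^ (s * θ) * w ^ (t * (1 - θ)) * (x ^ θ * x ^ (1 - θ)) := by ring
    _ = w ^ (s * θ) * w ^ (t * (1 - θ)) * x := by
      rw [← rpow_add' hx (by norm_num), add_sub_cancel, rpow_one]

theorem tsum_le_weighted_interpolation {ι : Type*} {w x : ι → ℝ} {k : ℝ} (hk : 0 ≤ k)
    (hw : ∀ i, 0 < w i) (hx : ∀ i, 0 ≤ x i) (hk_sum : Summable fun i => w i ^ k * x i)
    (h₂_sum : Summable fun i => w i ^ (-2 : ℝ) * x i) :
    ∑' i, x i ≤ (∑' i, w i ^ k * x i) ^ (2 / (k + 2)) *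
      (∑' i, w i ^ (-2 : ℝ) * x i) ^ (k / (k + 2)) := by
  have hk2 : 0 < k + 2 := by linarith
  have hθ : k / (k + 2) = 1 - 2 / (k + 2) := by field_simp; ring
  have hexp : k * (2 / (k + 2)) + -2 * (1 - 2 / (k + 2)) = 0 := by field_simp; ring
  rw [hθ]
  refine le_of_eq_of_le (tsum_congr fun i => ?_) (tsum_rpow_mul_rpow_le (by positivity)
    ((div_le_one hk2).2 (by linarith)) (fun i => mul_nonneg (rpow_nonneg (hw i).le _) (hx i))
    (fun i => mul_nonneg (rpow_nonneg (hw i).le _) (hx i)) hk_sum h₂_sum)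
  rw [mul_rpow_mul_rpow_one_sub (hw i) (hx i), hexp, rpow_zero, one_mul]

theorem integral_exp_mul_sub {c : ℝ} (hc : c ≠ 0) (T : ℝ) :
    ∫ t in (0:ℝ)..T, exp (c * (t - T)) = (1 - exp (-(c * T))) / c := by
  simp_rw [mul_sub]
  rw [integral_comp_mul_sub (fun t => exp t) hc, integral_exp, sub_self, exp_zero, mul_zero,
    zero_sub, smul_eq_mul, inv_mul_eq_div]

section

variable {a φ : ℝ → ℝ} {T : ℝ}

theorem mul_sub_le_integral_sub_integral {D : ℝ} (ha : ContinuousOn a (Icc 0 T))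
    (haD : ∀ t ∈ Icc 0 T, a t ≤ D) {t : ℝ} (ht : t ∈ Icc 0 T) :
    D * (t - T) ≤ (∫ s in (0:ℝ)..t, a s) - ∫ s in (0:ℝ)..T, a s := by
  have h0t := (ha.mono (Icc_subset_Icc le_rfl ht.2)).intervalIntegrable_of_Icc
    (μ := MeasureTheory.volume) ht.1
  have h0T := ha.intervalIntegrable_of_Icc (μ := MeasureTheory.volume) (ht.1.trans ht.2)
  have htT := (ha.mono (Icc_subset_Icc ht.1 le_rfl)).intervalIntegrable_of_Icc
    (μ := MeasureTheory.volume) ht.2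
  have hle : ∫ s in t..T, a s ≤ ∫ _ in t..T, D :=
    integral_mono_on ht.2 htT intervalIntegrable_const
      fun s hs => haD s ⟨ht.1.trans hs.1, hs.2⟩
  rw [integral_const, smul_eq_mul] at hle
  rw [integral_interval_sub_left h0t h0T, integral_symm]
  linarith

theorem continuousOn_primitive_sub (ha : ContinuousOn a (Icc 0 T)) (hT : 0 ≤ T) :
    ContinuousOn (fun t => (∫ s in (0:ℝ)..t, a s) - ∫ s in (0:ℝ)..T, a s) (Icc 0 T) := by
  refine ContinuousOn.sub ?_ continuousOn_const
  rw [← uIcc_of_le hT]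
  exact continuousOn_primitive_interval (by rw [uIcc_of_le hT]; exact ha.integrableOn_Icc)

theorem div_le_integral_exp_mul_primitive_mul {D₁ D₂ B c : ℝ} (hT : 0 ≤ T)
    (ha : ContinuousOn a (Icc 0 T)) (haD : ∀ t ∈ Icc 0 T, a t ≤ D₂)
    (hφ : ContinuousOn φ (Icc 0 T)) (hB : 0 ≤ B) (hBφ : ∀ t ∈ Icc 0 T, B ≤ φ t)
    (hc : 0 < c) (hD₂ : 0 < D₂) (hD₁ : D₁ ≤ c * D₂) :
    B * (1 - exp (-D₁ * T)) / (c * D₂) ≤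
      ∫ t in (0:ℝ)..T, exp (c * ((∫ s in (0:ℝ)..t, a s) - ∫ s in (0:ℝ)..T, a s)) * φ t := by
  have hcD : 0 < c * D₂ := mul_pos hc hD₂
  calc B * (1 - exp (-D₁ * T)) / (c * D₂)
      ≤ B * ((1 - exp (-(c * D₂ * T))) / (c * D₂)) := by
        rw [mul_div_assoc]
        gcongr
        nlinarith
    _ = ∫ t in (0:ℝ)..T, B * exp (c * D₂ * (t - T)) := by
        rw [integral_const_mul, integral_exp_mul_sub hcD.ne']
    _ ≤ _ := by
      refine integral_mono_on hT (Continuous.intervalIntegrable (by fun_prop) _ _)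
        (ContinuousOn.intervalIntegrable_of_Icc hT ?_) fun t ht => ?_
      · exact (continuous_exp.comp_continuousOn
          ((continuousOn_primitive_sub ha hT).const_smul c)).mul hφ
      · rw [mul_comm _ (φ t), mul_assoc c]
        exact mul_le_mul (hBφ t ht) (exp_le_exp.2 (mul_le_mul_of_nonneg_left
          (mul_sub_le_integral_sub_integral ha haD ht) hc.le)) (exp_pos _).le
          (hB.trans (hBφ t ht))

end

theorem one_add_rpow_neg_two_mul_sq_le {c C ι x : ℝ} (hc : 0 ≤ c) (hC : 0 ≤ C) (hι₀ : 0 ≤ ι)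
    (hι : ι ≤ C * c) : (1 + c) ^ (-2 : ℝ) * (ι * x) ^ 2 ≤ C ^ 2 * x ^ 2 := by
  rw [rpow_neg (by positivity), rpow_two, inv_mul_le_iff₀ (by positivity)]
  calc (ι * x) ^ 2 = ι ^ 2 * x ^ 2 := mul_pow ι x 2
    _ ≤ (C * (1 + c)) ^ 2 * x ^ 2 := by gcongr; nlinarith
    _ = (1 + c) ^ 2 * (C ^ 2 * x ^ 2) := by ring

theorem sqrt_le_rpow_mul_rpow_of_le {X M C S θ θ' : ℝ} (hM : 0 ≤ M) (hC : 0 ≤ C) (hS : 0 ≤ S)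
    (h : X ≤ (M ^ 2) ^ θ * (C ^ 2 * S) ^ θ') : √X ≤ C ^ θ' * M ^ θ * √S ^ θ' := by
  have hsq : (M ^ 2) ^ θ * (C ^ 2 * S) ^ θ' = (C ^ θ' * M ^ θ * √S ^ θ') ^ 2 := by
    rw [show C ^ 2 * S = (C * √S) ^ 2 by rw [mul_pow, sq_sqrt hS], ← rpow_pow_comm hM,
      ← rpow_pow_comm (by positivity), mul_rpow hC (sqrt_nonneg S)]
    ring
  rw [hsq] at h
  exact sqrt_le_iff.2 ⟨by positivity, h⟩

theorem stmt_2_general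
    (T D₁ D₂ B₁ B₂ : ℝ) (hT : 0 < T) (hD₁ : 0 < D₁) (hD₁₂ : D₁ ≤ D₂)
    (hB₁ : 0 < B₁)
    (a φ : ℝ → ℝ) (ha : ContinuousOn a (Set.Icc 0 T)) (hφc : ContinuousOn φ (Set.Icc 0 T))
    (haB : ∀ t ∈ Set.Icc 0 T, D₁ ≤ a t ∧ a t ≤ D₂)
    (hφB : ∀ t ∈ Set.Icc 0 T, B₁ ≤ φ t ∧ φ t ≤ B₂)
    (A Bf : ℝ → ℝ) (hA : ∀ t, A t = ∫ s in (0:ℝ)..t, a s)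
    (hBf : ∀ t, Bf t = A t - A T)
    (Φ : ℕ → (ℝ → ℝ) → ℝ)
    (hΦ : ∀ (n : ℕ) (h : ℝ → ℝ), Φ n h = ∫ t in (0:ℝ)..T, Real.exp ((n:ℝ)^2 * Bf t) * h t)
    (k M : ℝ) (hk : 0 ≤ k) (hM : 0 ≤ M)
    (g f : ℕ → ℝ)
    (hgsum : Summable (fun n : ℕ => (g (n+1))^2))
    (hf : ∀ n : ℕ, f (n+1) = (Φ (n+1) φ)⁻¹ * g (n+1))
    (hwsum : Summable (fun n : ℕ => ((1:ℝ) + ((n:ℝ)+1)^2) ^ k * (f (n+1))^2))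
    (hbound : (∑' n : ℕ, ((1:ℝ) + ((n:ℝ)+1)^2) ^ k * (f (n+1))^2) ≤ M^2) :
    Real.sqrt (∑' n : ℕ, (f (n+1))^2) ≤
      (D₂ / (B₁ * (1 - Real.exp (-D₁ * T)))) ^ (k/(k+2)) * M ^ (2/(k+2)) *
        (Real.sqrt (∑' n : ℕ, (g (n+1))^2)) ^ (k/(k+2)) := by
  have hD₂ : 0 < D₂ := hD₁.trans_le hD₁₂
  have hE : 0 < 1 - exp (-D₁ * T) := by
    linarith [exp_lt_one_iff.2 (by nlinarith : -D₁ * T < 0)]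
  set C := D₂ / (B₁ * (1 - exp (-D₁ * T)))
  have hC : 0 < C := by positivity
  have hΦ_inv (n : ℕ) : 0 < Φ (n + 1) φ ∧ (Φ (n + 1) φ)⁻¹ ≤ C * ((n : ℝ) + 1) ^ 2 := by
    have hn : (1 : ℝ) ≤ ((n : ℝ) + 1) ^ 2 := one_le_pow₀ (by linarith [n.cast_nonneg (α := ℝ)])
    have hlb : (C * ((n : ℝ) + 1) ^ 2)⁻¹ ≤ Φ (n + 1) φ := by
      simp only [hΦ, hBf, hA]
      push_cast
      convert div_le_integral_exp_mul_primitive_mul (D₁ := D₁)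
        (c := ((n : ℝ) + 1) ^ 2) hT.le ha (fun t ht => (haB t ht).2) hφc
        hB₁.le (fun t ht => (hφB t ht).1) (by positivity) hD₂ (by nlinarith) using 1
      simp only [C]
      field_simp
    exact ⟨(inv_pos.2 (by positivity)).trans_le hlb, inv_le_of_inv_le₀ (by positivity) hlb⟩
  have hv (n : ℕ) :
      (1 + ((n : ℝ) + 1) ^ 2) ^ (-2 : ℝ) * f (n + 1) ^ 2 ≤ C ^ 2 * g (n + 1) ^ 2 := by
    rw [hf]
    exact one_add_rpow_neg_two_mul_sq_le (by positivity) hC.le (inv_nonneg.2 (hΦ_inv n).1.le)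
      (hΦ_inv n).2
  have hv_sum := (hgsum.mul_left (C ^ 2)).of_nonneg_of_le (fun n => by positivity) hv
  refine sqrt_le_rpow_mul_rpow_of_le hM hC.le (tsum_nonneg fun n => sq_nonneg _) ?_
  refine (tsum_le_weighted_interpolation hk (fun n => by positivity) (fun n => sq_nonneg _)
    hwsum hv_sum).trans ?_
  gcongr
  exact (hv_sum.tsum_le_tsum hv (hgsum.mul_left _)).trans_eq tsum_mul_left

/-- conditional stability: if `f_n = Φ(n,φ)⁻¹ g_n` and
`Σ (1+n²)^k f_n² ≤ M²`, then
`‖f‖ ≤ (D₂/(B₁(1-e^{-D₁T})))^{k/(k+2)} M^{2/(k+2)} ‖g‖^{k/(k+2)}`. -/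
theorem stmt_2
    (T D₁ D₂ B₁ B₂ : ℝ) (hT : 0 < T) (hD₁ : 0 < D₁) (hD₁₂ : D₁ ≤ D₂)
    (hB₁ : 0 < B₁) (hB₁₂ : B₁ ≤ B₂)
    (a φ : ℝ → ℝ) (ha : ContinuousOn a (Set.Icc 0 T)) (hφc : ContinuousOn φ (Set.Icc 0 T))
    (haB : ∀ t ∈ Set.Icc 0 T, D₁ ≤ a t ∧ a t ≤ D₂)
    (hφB : ∀ t ∈ Set.Icc 0 T, B₁ ≤ φ t ∧ φ t ≤ B₂)
    (A Bf : ℝ → ℝ) (hA : ∀ t, A t = ∫ s in (0:ℝ)..t, a s)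
    (hBf : ∀ t, Bf t = A t - A T)
    (Φ : ℕ → (ℝ → ℝ) → ℝ)
    (hΦ : ∀ (n : ℕ) (h : ℝ → ℝ), Φ n h = ∫ t in (0:ℝ)..T, Real.exp ((n:ℝ)^2 * Bf t) * h t)
    (k M : ℝ) (hk : 0 ≤ k) (hM : 0 ≤ M)
    (g f : ℕ → ℝ)
    (hgsum : Summable (fun n : ℕ => (g (n+1))^2))
    (hf : ∀ n : ℕ, f (n+1) = (Φ (n+1) φ)⁻¹ * g (n+1))
    (hwsum : Summable (fun n : ℕ => ((1:ℝ) + ((n:ℝ)+1)^2) ^ k * (f (n+1))^2))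
    (hbound : (∑' n : ℕ, ((1:ℝ) + ((n:ℝ)+1)^2) ^ k * (f (n+1))^2) ≤ M^2) :
    Real.sqrt (∑' n : ℕ, (f (n+1))^2) ≤
      (D₂ / (B₁ * (1 - Real.exp (-D₁ * T)))) ^ (k/(k+2)) * M ^ (2/(k+2)) *
        (Real.sqrt (∑' n : ℕ, (g (n+1))^2)) ^ (k/(k+2)) :=
  stmt_2_general T D₁ D₂ B₁ B₂ hT hD₁ hD₁₂ hB₁ a φ ha hφc haB hφB A Bf hA hBf Φ hΦ k M hk hM g f
    hgsum hf hwsum hbound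
end

section
/- For every square-summable real sequence (f_n)_{n≥1} and every integer m ≥ 1, one has Σ_{n=m+1}^∞ (∫₀ᵀ e^{n²B(t)} dt)² f_n² ≤ (1/(m⁴ D₁²)) · Σ_{n=1}^∞ f_n². (This is the estimate showing that the finite-rank truncations K_m of the source-to-data operator K converge to K in operator norm, so that K is compact.) -/
/-- Auxiliary: the exponential integral bound `∫₀ᵀ e^{c B(t)} dt ≤ 1/(c D₁)`. -/
lemma key_int_bound (T D₁ : ℝ) (hT : 0 < T) (hD₁ : 0 < D₁)
    (a A Bf : ℝ → ℝ) (ha : ContinuousOn a (Set.Icc 0 T))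
    (haB : ∀ t ∈ Set.Icc 0 T, D₁ ≤ a t)
    (hA : ∀ t, A t = ∫ s in (0:ℝ)..t, a s)
    (hBf : ∀ t, Bf t = A t - A T)
    (c : ℝ) (hc : 0 < c) :
    ∫ t in (0:ℝ)..T, Real.exp (c * Bf t) ≤ 1 / (c * D₁) := by
  set k : ℝ := c * D₁ with hk_def
  have hk : 0 < k := mul_pos hc hD₁
  have hIcc : Set.Icc (0:ℝ) T = Set.uIcc (0:ℝ) T := (Set.uIcc_of_le hT.le).symm
  -- integrability of a on subintervals
  have hint : ∀ u v : ℝ, u ∈ Set.Icc (0:ℝ) T → v ∈ Set.Icc (0:ℝ) T →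
      IntervalIntegrable a MeasureTheory.volume u v := by
    intro u v hu hv
    apply ContinuousOn.intervalIntegrable
    apply ha.mono
    rw [hIcc]
    exact Set.uIcc_subset_uIcc (hIcc ▸ hu) (hIcc ▸ hv)
  have h0T : (0:ℝ) ∈ Set.Icc (0:ℝ) T := ⟨le_refl _, hT.le⟩
  have hTT : T ∈ Set.Icc (0:ℝ) T := ⟨hT.le, le_refl _⟩
  -- pointwise bound
  have hpt : ∀ t ∈ Set.Icc (0:ℝ) T, Real.exp (c * Bf t) ≤ Real.exp (k * (t - T)) := by
    intro t ht
    apply Real.exp_le_exp.2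
    have h1 : A t + ∫ s in t..T, a s = A T := by
      rw [hA, hA]
      exact intervalIntegral.integral_add_adjacent_intervals (hint 0 t h0T ht)
        (hint t T ht hTT)
    have h2 : D₁ * (T - t) ≤ ∫ s in t..T, a s := by
      have := intervalIntegral.integral_mono_on (μ := MeasureTheory.volume)
        (f := fun _ => D₁) (g := a) ht.2 intervalIntegrable_const (hint t T ht hTT)
        (fun x hx => haB x ⟨ht.1.trans hx.1, hx.2⟩)
      simpa [mul_comm] using this
    have h3 : Bf t ≤ -(D₁ * (T - t)) := by
      rw [hBf, ← h1]; linarith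
    have := mul_le_mul_of_nonneg_left h3 hc.le
    calc c * Bf t ≤ c * -(D₁ * (T - t)) := this
      _ = k * (t - T) := by rw [hk_def]; ring
  -- continuity of the integrand
  have hAcont : ContinuousOn A (Set.Icc 0 T) := by
    have h1 : ContinuousOn (fun t => ∫ s in (0:ℝ)..t, a s) (Set.uIcc 0 T) :=
      intervalIntegral.continuousOn_primitive_interval' (hint 0 T h0T hTT) Set.left_mem_uIcc
    exact ((hIcc ▸ h1)).congr (fun t _ => hA t)
  have hBfcont : ContinuousOn Bf (Set.Icc 0 T) :=
    (hAcont.sub continuousOn_const).congr (fun t _ => hBf t)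
  have hLcont : ContinuousOn (fun t => Real.exp (c * Bf t)) (Set.Icc 0 T) :=
    Real.continuous_exp.comp_continuousOn (continuousOn_const.mul hBfcont)
  have hLint : IntervalIntegrable (fun t => Real.exp (c * Bf t)) MeasureTheory.volume 0 T :=
    (hIcc ▸ hLcont).intervalIntegrable
  have hRint : IntervalIntegrable (fun t => Real.exp (k * (t - T))) MeasureTheory.volume 0 T :=
    (Continuous.intervalIntegrable (by continuity) 0 T)
  have hmono : (∫ t in (0:ℝ)..T, Real.exp (c * Bf t))
      ≤ ∫ t in (0:ℝ)..T, Real.exp (k * (t - T)) :=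
    intervalIntegral.integral_mono_on hT.le hLint hRint hpt
  -- compute the right integral
  have hderiv : ∀ t ∈ Set.uIcc (0:ℝ) T,
      HasDerivAt (fun t => Real.exp (k * (t - T)) / k) (Real.exp (k * (t - T))) t := by
    intro t _
    have h1 : HasDerivAt (fun t : ℝ => k * (t - T)) k t := by
      simpa using (((hasDerivAt_id t).sub_const T).const_mul k)
    have h2 := h1.exp
    have h3 := h2.div_const k
    simpa [mul_div_assoc, mul_div_cancel_right₀ _ hk.ne'] using h3
  have hcomp : (∫ t in (0:ℝ)..T, Real.exp (k * (t - T)))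
      = Real.exp (k * (T - T)) / k - Real.exp (k * (0 - T)) / k :=
    intervalIntegral.integral_eq_sub_of_hasDerivAt hderiv hRint
  have : (∫ t in (0:ℝ)..T, Real.exp (k * (t - T))) ≤ 1 / k := by
    rw [hcomp]
    have := (Real.exp_pos (k * (0 - T))).le
    have h1 : Real.exp (k * (T - T)) = 1 := by simp
    rw [h1]
    have := div_nonneg (Real.exp_pos (k * (0 - T))).le hk.le
    linarith
  exact hmono.trans this

/-- compactness estimate: for every square-summable `(f_n)` and every `m ≥ 1`,
`Σ_{n=m+1}^∞ (∫₀ᵀ e^{n²B(t)} dt)² f_n² ≤ (1/(m⁴D₁²)) Σ_{n=1}^∞ f_n²`. -/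
theorem stmt_3
    (T D₁ D₂ : ℝ) (hT : 0 < T) (hD₁ : 0 < D₁) (hD₁₂ : D₁ ≤ D₂)
    (a : ℝ → ℝ) (ha : ContinuousOn a (Set.Icc 0 T))
    (haB : ∀ t ∈ Set.Icc 0 T, D₁ ≤ a t ∧ a t ≤ D₂)
    (A Bf : ℝ → ℝ) (hA : ∀ t, A t = ∫ s in (0:ℝ)..t, a s)
    (hBf : ∀ t, Bf t = A t - A T)
    (f : ℕ → ℝ) (hfsum : Summable (fun n : ℕ => (f (n+1))^2))
    (m : ℕ) (hm : 1 ≤ m) :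
    (∑' n : ℕ, (∫ t in (0:ℝ)..T, Real.exp (((m+1+n : ℕ):ℝ)^2 * Bf t))^2 * (f (m+1+n))^2)
      ≤ 1 / ((m:ℝ)^4 * D₁^2) * ∑' n : ℕ, (f (n+1))^2 := by
  set C : ℝ := 1 / ((m:ℝ)^4 * D₁^2) with hC_def
  have hmpos : (0:ℝ) < (m:ℝ) := by exact_mod_cast hm
  have hCpos : 0 < (m:ℝ)^4 * D₁^2 := by positivity
  have hCnonneg : 0 ≤ C := by positivity
  set I : ℕ → ℝ := fun n => ∫ t in (0:ℝ)..T, Real.exp (((m+1+n : ℕ):ℝ)^2 * Bf t) with hI_def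
  have hI_nonneg : ∀ n, 0 ≤ I n := fun n =>
    intervalIntegral.integral_nonneg hT.le (fun t _ => (Real.exp_pos _).le)
  have hI_le : ∀ n : ℕ, I n ≤ 1 / (((m+1+n : ℕ):ℝ)^2 * D₁) := by
    intro n
    apply key_int_bound T D₁ hT hD₁ a A Bf ha (fun t ht => (haB t ht).1) hA hBf
    have : (0:ℝ) < ((m+1+n : ℕ):ℝ) := by positivity
    positivity
  -- termwise bound
  have hterm : ∀ n : ℕ, (I n)^2 * (f (m+1+n))^2 ≤ C * (f (m+1+n))^2 := by
    intro n
    apply mul_le_mul_of_nonneg_right _ (sq_nonneg _)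
    have hN : (m:ℝ) ≤ ((m+1+n : ℕ):ℝ) := by exact_mod_cast Nat.le_add_right m (1+n) |>.trans (by omega)
    have hNpos : (0:ℝ) < ((m+1+n : ℕ):ℝ) := lt_of_lt_of_le hmpos hN
    calc (I n)^2 ≤ (1 / (((m+1+n : ℕ):ℝ)^2 * D₁))^2 :=
          pow_le_pow_left₀ (hI_nonneg n) (hI_le n) 2
      _ = 1 / (((m+1+n : ℕ):ℝ)^4 * D₁^2) := by
          rw [div_pow, mul_pow, ← pow_mul]; norm_num
      _ ≤ C := by
          rw [hC_def]
          apply one_div_le_one_div_of_le hCpos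
          exact mul_le_mul_of_nonneg_right (pow_le_pow_left₀ hmpos.le hN 4) (sq_nonneg D₁)
  -- summability
  have hshift : Summable (fun n : ℕ => (f (m+1+n))^2) := by
    have h1 : Summable (fun n : ℕ => (f (n + m + 1))^2) :=
      (summable_nat_add_iff m).2 hfsum
    exact h1.congr (fun n => by rw [show n + m + 1 = m + 1 + n by omega])
  have hLsum : Summable (fun n : ℕ => (I n)^2 * (f (m+1+n))^2) :=
    Summable.of_nonneg_of_le (fun n => mul_nonneg (sq_nonneg _) (sq_nonneg _)) hterm
      (hshift.mul_left C)
  -- chain of inequalities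
  calc (∑' n : ℕ, (I n)^2 * (f (m+1+n))^2)
      ≤ ∑' n : ℕ, C * (f (m+1+n))^2 := Summable.tsum_le_tsum hterm hLsum (hshift.mul_left C)
    _ = C * ∑' n : ℕ, (f (m+1+n))^2 := tsum_mul_left
    _ ≤ C * ∑' n : ℕ, (f (n+1))^2 := by
        apply mul_le_mul_of_nonneg_left _ hCnonneg
        apply Summable.tsum_le_tsum_of_inj (fun n : ℕ => m + n)
          (add_right_injective m)
          (fun c _ => sq_nonneg _)
          (fun n => by rw [show m + 1 + n = (m + n) + 1 by omega])
          hshift hfsum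
end

section
/- Let (g_n^ε)_{n≥1} be a square-summable real sequence, let ε > 0 and τ > 1 satisfy 0 < τε < ‖g^ε‖ = (Σ_{n≥1} (g_n^ε)²)^{1/2}, and let ρ(μ) = (Σ_{n≥1} (μ²/(μ² + Φ(n,φ_ε)²))² (g_n^ε)²)^{1/2}. Then there exists a unique μ > 0 such that ρ(μ) = τε. -/
/-!
Each `Φ(n, φ_ε)` is positive, as the integral of a positive continuous function. Hence every
filter factor `μ² / (μ² + Φ(n, φ_ε)²)` is continuous, vanishes at `0`, increases strictly on
`[0, ∞)` and tends to `1`. Dominated by `(g_n^ε)²`, the series `ρ(μ)²` inherits continuity and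
strict monotonicity (some `g_n^ε ≠ 0` because `‖g^ε‖ > 0`), is `0` at `μ = 0` and tends to
`‖g^ε‖² > (τε)²` by Tannery's theorem. The intermediate value theorem gives a solution, strict
monotonicity its uniqueness.
-/

open Filter Topology Set

noncomputable def filterRatio (c μ : ℝ) : ℝ := μ ^ 2 / (μ ^ 2 + c ^ 2)

/-- `ρ(μ)²`, for `c n = Φ(n + 1, φ_ε)` and `g n = g_{n+1}^ε`. -/
noncomputable def residualSq (c g : ℕ → ℝ) (μ : ℝ) : ℝ :=
  ∑' n, filterRatio (c n) μ ^ 2 * g n ^ 2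

section FilterRatio

variable (c : ℝ)

@[simp]
lemma filterRatio_zero : filterRatio c 0 = 0 := by simp [filterRatio]

lemma filterRatio_nonneg (μ : ℝ) : 0 ≤ filterRatio c μ := by
  unfold filterRatio; positivity

lemma filterRatio_le_one (μ : ℝ) : filterRatio c μ ≤ 1 :=
  div_le_one_of_le₀ (le_add_of_nonneg_right (sq_nonneg c)) (by positivity)

lemma filterRatio_sq_mul_le (μ x : ℝ) : filterRatio c μ ^ 2 * x ^ 2 ≤ x ^ 2 :=
  mul_le_of_le_one_left (sq_nonneg x)
    (pow_le_one₀ (filterRatio_nonneg c μ) (filterRatio_le_one c μ))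

variable {c}

lemma continuous_filterRatio (hc : c ≠ 0) : Continuous (filterRatio c) :=
  (continuous_pow 2).div ((continuous_pow 2).add continuous_const) fun μ => by positivity

lemma strictMonoOn_filterRatio (hc : c ≠ 0) : StrictMonoOn (filterRatio c) (Ici 0) := by
  intro μ₁ (h₁ : 0 ≤ μ₁) μ₂ _ h₁₂
  have hsq : μ₁ ^ 2 < μ₂ ^ 2 := pow_lt_pow_left₀ h₁₂ h₁ two_ne_zero
  rw [filterRatio, filterRatio, div_lt_div_iff₀ (by positivity) (by positivity)]
  nlinarith [sq_pos_of_ne_zero hc]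

lemma tendsto_filterRatio_atTop : Tendsto (filterRatio c) atTop (𝓝 1) := by
  have hden : Tendsto (fun μ : ℝ => μ ^ 2 + c ^ 2) atTop atTop :=
    tendsto_atTop_add_const_right _ _ (tendsto_pow_atTop two_ne_zero)
  have hlim := (tendsto_const_nhds (x := (1 : ℝ))).sub
    ((tendsto_const_nhds (x := c ^ 2)).div_atTop hden)
  rw [sub_zero] at hlim
  refine hlim.congr' ((hden.eventually_gt_atTop 0).mono fun μ hμ => ?_)
  rw [filterRatio, eq_div_iff hμ.ne', sub_mul, div_mul_cancel₀ _ hμ.ne']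
  ring

end FilterRatio

section ResidualSq

variable {c g : ℕ → ℝ}

lemma summable_filterRatio_sq_mul (hg : Summable fun n => g n ^ 2) (μ : ℝ) :
    Summable fun n => filterRatio (c n) μ ^ 2 * g n ^ 2 :=
  hg.of_nonneg_of_le (fun _ => by positivity) fun n => filterRatio_sq_mul_le _ μ _

lemma residualSq_zero : residualSq c g 0 = 0 := by simp [residualSq]

lemma continuous_residualSq (hc : ∀ n, c n ≠ 0) (hg : Summable fun n => g n ^ 2) :
    Continuous (residualSq c g) :=
  continuous_tsum (fun n => ((continuous_filterRatio (hc n)).pow 2).mul continuous_const) hg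
    fun n μ => by
      rw [Real.norm_of_nonneg (by positivity)]
      exact filterRatio_sq_mul_le _ μ _

lemma strictMonoOn_residualSq (hc : ∀ n, c n ≠ 0) (hg : Summable fun n => g n ^ 2)
    {n₀ : ℕ} (hn₀ : g n₀ ≠ 0) : StrictMonoOn (residualSq c g) (Ici 0) := by
  have hterm : ∀ n, StrictMonoOn (fun μ => filterRatio (c n) μ ^ 2) (Ici 0) := fun n =>
    (pow_left_strictMonoOn₀ two_ne_zero).comp (strictMonoOn_filterRatio (hc n))
      fun μ _ => filterRatio_nonneg _ μ
  intro μ₁ h₁ μ₂ h₂ h₁₂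
  exact (summable_filterRatio_sq_mul hg μ₁).tsum_lt_tsum
    (fun n => mul_le_mul_of_nonneg_right ((hterm n).monotoneOn h₁ h₂ h₁₂.le) (sq_nonneg _))
    (mul_lt_mul_of_pos_right (hterm n₀ h₁ h₂ h₁₂) (by positivity))
    (summable_filterRatio_sq_mul hg μ₂)

lemma tendsto_residualSq_atTop (hg : Summable fun n => g n ^ 2) :
    Tendsto (residualSq c g) atTop (𝓝 (∑' n, g n ^ 2)) := by
  refine tendsto_tsum_of_dominated_convergence hg (fun n => ?_)
    (Eventually.of_forall fun μ n => ?_)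
  · simpa using (tendsto_filterRatio_atTop.pow 2).mul_const (g n ^ 2)
  · rw [Real.norm_of_nonneg (by positivity)]
    exact filterRatio_sq_mul_le _ μ _

end ResidualSq

lemma existsUnique_pos_eq_of_strictMonoOn {f : ℝ → ℝ} {y L : ℝ}
    (hf : ContinuousOn f (Ici 0)) (hmono : StrictMonoOn f (Ici 0)) (h0 : f 0 < y)
    (hlim : Tendsto f atTop (𝓝 L)) (hyL : y < L) : ∃! x, 0 < x ∧ f x = y := by
  obtain ⟨b, hb, hyb⟩ :=
    ((eventually_ge_atTop 0).and (hlim.eventually (eventually_gt_nhds hyL))).exists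
  obtain ⟨x, hx, hfx⟩ := intermediate_value_Icc hb (hf.mono Icc_subset_Ici_self)
    ⟨h0.le, hyb.le⟩
  have hx0 : x ≠ 0 := by rintro rfl; exact h0.ne hfx
  refine ⟨x, ⟨lt_of_le_of_ne hx.1 (Ne.symm hx0), hfx⟩, fun x' ⟨hx', hfx'⟩ => ?_⟩
  exact hmono.injOn (mem_Ici.2 hx'.le) (mem_Ici.2 hx.1) (hfx'.trans hfx.symm)

lemma existsUnique_sqrt_residualSq_eq {c g : ℕ → ℝ} (hc : ∀ n, c n ≠ 0)
    (hg : Summable fun n => g n ^ 2) {r : ℝ} (hr : 0 < r) (hrg : r < √(∑' n, g n ^ 2)) :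
    ∃! μ, 0 < μ ∧ √(residualSq c g μ) = r := by
  have hrS : r ^ 2 < ∑' n, g n ^ 2 := (Real.lt_sqrt hr.le).1 hrg
  obtain ⟨n₀, hn₀⟩ : ∃ n, g n ≠ 0 := by
    by_contra! h
    exact (sq_nonneg r).not_gt (by simpa [h] using hrS)
  have hsqrt : ∀ μ, √(residualSq c g μ) = r ↔ residualSq c g μ = r ^ 2 := fun μ =>
    Real.sqrt_eq_iff_eq_sq (tsum_nonneg fun _ => by positivity) hr.le
  simp only [hsqrt]
  exact existsUnique_pos_eq_of_strictMonoOn (continuous_residualSq hc hg).continuousOn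
    (strictMonoOn_residualSq hc hg hn₀) (by rw [residualSq_zero]; positivity)
    (tendsto_residualSq_atTop hg) hrS

lemma integral_exp_mul_pos {a b : ℝ} (hab : a < b) {f h : ℝ → ℝ}
    (hf : ContinuousOn f (Icc a b)) (hh : ContinuousOn h (Icc a b))
    (hpos : ∀ t ∈ Icc a b, 0 < h t) : 0 < ∫ t in a..b, Real.exp (f t) * h t := by
  refine intervalIntegral.intervalIntegral_pos_of_pos_on ?_
    (fun t ht => mul_pos (Real.exp_pos _) (hpos t (Ioo_subset_Icc_self ht))) hab
  exact ((Real.continuous_exp.comp_continuousOn hf).mul hh).intervalIntegrable_of_Icc hab.le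

theorem stmt_15_general
    (T C₁ C₂ : ℝ) (hT : 0 < T)
    (hC₁ : 0 < C₁)
    (a φε : ℝ → ℝ) (ha : ContinuousOn a (Set.Icc 0 T))
    (hφεc : ContinuousOn φε (Set.Icc 0 T))
    (hφεB : ∀ t ∈ Set.Icc 0 T, C₁ ≤ φε t ∧ φε t ≤ C₂)
    (A Bf : ℝ → ℝ) (hA : ∀ t, A t = ∫ s in (0:ℝ)..t, a s)
    (hBf : ∀ t, Bf t = A t - A T)
    (Φ : ℕ → (ℝ → ℝ) → ℝ)
    (hΦ : ∀ (n : ℕ) (h : ℝ → ℝ), Φ n h = ∫ t in (0:ℝ)..T, Real.exp ((n:ℝ)^2 * Bf t) * h t)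
    (gε : ℕ → ℝ)
    (hgεsum : Summable (fun n : ℕ => (gε (n+1))^2))
    (ε τ : ℝ) (hε : 0 < ε) (hτ : 1 < τ)
    (hτε : τ * ε < Real.sqrt (∑' n : ℕ, (gε (n+1))^2))
    (ρ : ℝ → ℝ)
    (hρ : ∀ μ : ℝ, ρ μ =
      Real.sqrt (∑' n : ℕ, (μ^2 / (μ^2 + (Φ (n+1) φε)^2))^2 * (gε (n+1))^2)) :
    ∃! μ : ℝ, 0 < μ ∧ ρ μ = τ * ε := by
  have hA_cont : ContinuousOn A (Icc 0 T) := by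
    rw [funext hA, ← uIcc_of_le hT.le]
    exact intervalIntegral.continuousOn_primitive_interval'
      (ha.intervalIntegrable_of_Icc hT.le) left_mem_uIcc
  have hBf_cont : ContinuousOn Bf (Icc 0 T) := by
    rw [funext hBf]
    exact hA_cont.sub continuousOn_const
  have hΦ_pos : ∀ n, 0 < Φ n φε := fun n => by
    rw [hΦ]
    exact integral_exp_mul_pos hT (continuousOn_const.mul hBf_cont) hφεc
      fun t ht => hC₁.trans_le (hφεB t ht).1
  obtain rfl : ρ = fun μ => √(residualSq (fun n => Φ (n + 1) φε) (fun n => gε (n + 1)) μ) :=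
    funext hρ
  exact existsUnique_sqrt_residualSq_eq (fun n => (hΦ_pos (n + 1)).ne') hgεsum
    (mul_pos (by linarith) hε) hτε

/-- existence and uniqueness of the a posteriori parameter: if
`0 < τε < ‖g^ε‖` with `τ > 1`, there exists a unique `μ > 0` with `ρ(μ) = τε`. -/
theorem stmt_15
    (T D₁ D₂ C₁ C₂ : ℝ) (hT : 0 < T) (hD₁ : 0 < D₁) (hD₁₂ : D₁ ≤ D₂)
    (hC₁ : 0 < C₁) (hC₁₂ : C₁ ≤ C₂)
    (a φε : ℝ → ℝ) (ha : ContinuousOn a (Set.Icc 0 T))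
    (hφεc : ContinuousOn φε (Set.Icc 0 T))
    (haB : ∀ t ∈ Set.Icc 0 T, D₁ ≤ a t ∧ a t ≤ D₂)
    (hφεB : ∀ t ∈ Set.Icc 0 T, C₁ ≤ φε t ∧ φε t ≤ C₂)
    (A Bf : ℝ → ℝ) (hA : ∀ t, A t = ∫ s in (0:ℝ)..t, a s)
    (hBf : ∀ t, Bf t = A t - A T)
    (Φ : ℕ → (ℝ → ℝ) → ℝ)
    (hΦ : ∀ (n : ℕ) (h : ℝ → ℝ), Φ n h = ∫ t in (0:ℝ)..T, Real.exp ((n:ℝ)^2 * Bf t) * h t)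
    (gε : ℕ → ℝ)
    (hgεsum : Summable (fun n : ℕ => (gε (n+1))^2))
    (ε τ : ℝ) (hε : 0 < ε) (hτ : 1 < τ)
    (hτε : τ * ε < Real.sqrt (∑' n : ℕ, (gε (n+1))^2))
    (ρ : ℝ → ℝ)
    (hρ : ∀ μ : ℝ, ρ μ =
      Real.sqrt (∑' n : ℕ, (μ^2 / (μ^2 + (Φ (n+1) φε)^2))^2 * (gε (n+1))^2)) :
    ∃! μ : ℝ, 0 < μ ∧ ρ μ = τ * ε :=
  stmt_15_general T C₁ C₂ hT hC₁ a φε ha hφεc hφεB A Bf hA hBf Φ hΦ gε hgεsum ε τ hε hτ hτε ρ hρ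
end

section
/- Let k ∈ (0,1] and fix T, B₁, B₂, C₁, C₂, D₁, D₂ as in the context. There exists a constant P > 0, depending only on k, T, B₁, B₂, C₁, C₂, D₁, D₂, such that the following holds: for every M > 0, every real sequence (f_n)_{n≥1} with Σ_{n≥1} (1+n²)^{2k} f_n² ≤ M², g_n = Φ(n,φ) f_n, every square-summable (g_n^ε)_{n≥1} with ‖g − g^ε‖ ≤ ε, every τ > 1 with 0 < τε < ‖g^ε‖, and μ > 0 the (unique) solution of ρ(μ) = τε, one has ε/μ^{k+1} ≤ (P/(τ−1)) · H((1−k)/2) · M, where H(y) = y^y (1−y)^{1−y} for y ∈ (0,1) and H(0) = H(1) = 1. -/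
/-!
Put `r_n = μ² / (μ² + Φ(n,φ_ε)²) ∈ [0,1]`. Since `ρ(μ) = ‖r g^ε‖`, Minkowski's inequality in
`ℓ²` gives `τε ≤ ‖r (g^ε - g)‖ + ‖r g‖ ≤ ε + ‖r g‖`, i.e. `(τ - 1) ε ≤ ‖r g‖`.

Integrating `d/dt e^{c B(t)} = c a(t) e^{c B(t)}` against `h / a` shows that `Φ(n,h) ≍ 1/n²`;
precisely `c₁ / n² ≤ Φ(n,φ_ε)` and `Φ(n,φ) ≤ c₂ / n²` with `c₁ = C₁ (1 - e^{-D₁T}) / D₂`,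
`c₂ = B₂ / D₁`. Writing `x = Φ(n,φ_ε)`, this yields
`r_n Φ(n,φ) ≤ (c₂ / c₁^{k+1}) · μ² x^{k+1} / (μ² + x²) · (1 + n²)^k`, and the weighted AM-GM
inequality `t^{1-y} ≤ y^y (1-y)^{1-y} (1 + t)` at `y = (1-k)/2`, `t = x²/μ²` bounds the middle
factor by `H((1-k)/2) μ^{k+1}`. The a priori bound on `f` then gives
`‖r g‖ ≤ (c₂ / c₁^{k+1}) H((1-k)/2) μ^{k+1} M`.
-/

open Real Set MeasureTheory intervalIntegral

section SquareSummable

variable {ι : Type*}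

theorem sqrt_tsum_sq_add_le {u v : ι → ℝ} (hu : Summable fun i => u i ^ 2)
    (hv : Summable fun i => v i ^ 2) :
    √(∑' i, (u i + v i) ^ 2) ≤ √(∑' i, u i ^ 2) + √(∑' i, v i ^ 2) := by
  have habs : ∀ w : ι → ℝ, (fun i => |w i| ^ (2 : ℝ)) = fun i => w i ^ 2 :=
    fun w => funext fun i => by rw [rpow_two, sq_abs]
  obtain ⟨hsum, hle⟩ := Real.Lp_add_le_tsum_of_nonneg one_le_two
    (fun i => abs_nonneg (u i)) (fun i => abs_nonneg (v i)) (by rwa [habs]) (by rwa [habs])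
  simp only [rpow_two, sq_abs, ← sqrt_eq_rpow] at hsum hle
  have hpt : ∀ i, (u i + v i) ^ 2 ≤ (|u i| + |v i|) ^ 2 := fun i => by
    rw [← sq_abs (u i + v i)]
    exact pow_le_pow_left₀ (abs_nonneg _) (abs_add_le _ _) 2
  refine le_trans (sqrt_le_sqrt ?_) hle
  exact (hsum.of_nonneg_of_le (fun i => sq_nonneg _) hpt).tsum_le_tsum hpt hsum

theorem summable_sq_and_sqrt_tsum_le {u v : ι → ℝ} {C : ℝ} (hC : 0 ≤ C) (hv : Summable v)
    (huv : ∀ i, u i ^ 2 ≤ C ^ 2 * v i) :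
    (Summable fun i => u i ^ 2) ∧ √(∑' i, u i ^ 2) ≤ C * √(∑' i, v i) := by
  have hu : Summable fun i => u i ^ 2 :=
    (hv.mul_left (C ^ 2)).of_nonneg_of_le (fun i => sq_nonneg _) huv
  refine ⟨hu, ?_⟩
  calc √(∑' i, u i ^ 2) ≤ √(C ^ 2 * ∑' i, v i) := by
        rw [← tsum_mul_left]; exact sqrt_le_sqrt (hu.tsum_le_tsum huv (hv.mul_left _))
    _ = C * √(∑' i, v i) := by rw [sqrt_mul (sq_nonneg C), sqrt_sq hC]

theorem sqrt_tsum_sq_mul_le_add {r g gε : ι → ℝ} (hr : ∀ i, |r i| ≤ 1)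
    (hg : Summable fun i => g i ^ 2) (hgε : Summable fun i => gε i ^ 2) :
    √(∑' i, (r i * gε i) ^ 2) ≤ √(∑' i, (g i - gε i) ^ 2) + √(∑' i, (r i * g i) ^ 2) := by
  have hr_mul : ∀ i x, (r i * x) ^ 2 ≤ 1 ^ 2 * x ^ 2 := fun i x => by
    rw [mul_pow, one_pow]
    exact mul_le_mul_of_nonneg_right ((sq_le_one_iff_abs_le_one _).2 (hr i)) (sq_nonneg x)
  have hdiff : Summable fun i => (g i - gε i) ^ 2 :=
    ((hg.add hgε).mul_left 2).of_nonneg_of_le (fun i => sq_nonneg _)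
      fun i => by nlinarith [sq_nonneg (g i + gε i)]
  obtain ⟨hsum_noise, hnoise⟩ := summable_sq_and_sqrt_tsum_le (u := fun i => r i * (gε i - g i))
    zero_le_one hdiff fun i => (hr_mul i (gε i - g i)).trans_eq (by ring)
  obtain ⟨hsum_g, -⟩ := summable_sq_and_sqrt_tsum_le zero_le_one hg fun i => hr_mul i (g i)
  calc √(∑' i, (r i * gε i) ^ 2)
      = √(∑' i, (r i * (gε i - g i) + r i * g i) ^ 2) := by simp only [← mul_add, sub_add_cancel]
    _ ≤ √(∑' i, (r i * (gε i - g i)) ^ 2) + √(∑' i, (r i * g i) ^ 2) :=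
        sqrt_tsum_sq_add_le hsum_noise hsum_g
    _ ≤ √(∑' i, (g i - gε i) ^ 2) + √(∑' i, (r i * g i) ^ 2) := by
        rw [one_mul] at hnoise; gcongr

end SquareSummable

section ExpPrimitive

variable {a A : ℝ → ℝ} {T : ℝ}

theorem hasDerivAt_integral_of_continuousOn (ha : ContinuousOn a (Icc 0 T)) {t : ℝ}
    (ht : t ∈ Ioo 0 T) : HasDerivAt (fun u => ∫ s in (0 : ℝ)..u, a s) (a t) t := by
  refine integral_hasDerivAt_right ?_
    ((ha.mono Ioo_subset_Icc_self).stronglyMeasurableAtFilter isOpen_Ioo t ht)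
    (ha.continuousAt (Icc_mem_nhds ht.1 ht.2))
  refine (ha.mono ?_).intervalIntegrable
  rw [uIcc_of_le ht.1.le]
  exact Icc_subset_Icc_right ht.2.le

theorem continuousOn_exp_mul_primitive_sub (hT : 0 ≤ T) (ha : ContinuousOn a (Icc 0 T))
    (hA : ∀ t, A t = ∫ s in (0 : ℝ)..t, a s) (c : ℝ) :
    ContinuousOn (fun t => exp (c * (A t - A T))) (Icc 0 T) := by
  have hAc : ContinuousOn A (Icc 0 T) := by
    rw [funext hA, ← uIcc_of_le hT]
    exact continuousOn_primitive_interval (by rw [uIcc_of_le hT]; exact ha.integrableOn_Icc)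
  fun_prop

theorem integral_mul_exp_mul_primitive_sub (hT : 0 ≤ T) (ha : ContinuousOn a (Icc 0 T))
    (hA : ∀ t, A t = ∫ s in (0 : ℝ)..t, a s) (c : ℝ) :
    ∫ t in (0 : ℝ)..T, c * a t * exp (c * (A t - A T)) = 1 - exp (-(c * A T)) := by
  have hE := continuousOn_exp_mul_primitive_sub hT ha hA c
  have hderiv : ∀ t ∈ Ioo 0 T,
      HasDerivAt (fun t => exp (c * (A t - A T))) (c * a t * exp (c * (A t - A T))) t := by
    intro t ht
    have hAt : HasDerivAt A (a t) t := funext hA ▸ hasDerivAt_integral_of_continuousOn ha ht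
    convert ((hAt.sub_const (A T)).const_mul c).exp using 1
    ring
  rw [integral_eq_sub_of_hasDerivAt_of_le hT hE hderiv
    (((continuousOn_const.mul ha).mul hE).intervalIntegrable_of_Icc hT)]
  simp [hA 0]

theorem integral_exp_mul_primitive_sub_mul_le {h : ℝ → ℝ} {D₁ U c : ℝ} (hT : 0 ≤ T)
    (ha : ContinuousOn a (Icc 0 T)) (hA : ∀ t, A t = ∫ s in (0 : ℝ)..t, a s)
    (hD₁ : 0 < D₁) (haD₁ : ∀ t ∈ Icc 0 T, D₁ ≤ a t) (hh : ContinuousOn h (Icc 0 T))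
    (hU : 0 ≤ U) (hhU : ∀ t ∈ Icc 0 T, h t ≤ U) (hc : 0 < c) :
    ∫ t in (0 : ℝ)..T, exp (c * (A t - A T)) * h t ≤ U / D₁ / c := by
  have hE := continuousOn_exp_mul_primitive_sub hT ha hA c
  have hcaE : IntervalIntegrable (fun t => c * a t * exp (c * (A t - A T))) volume 0 T :=
    ((continuousOn_const.mul ha).mul hE).intervalIntegrable_of_Icc hT
  calc ∫ t in (0 : ℝ)..T, exp (c * (A t - A T)) * h t
      ≤ ∫ t in (0 : ℝ)..T, U / D₁ / c * (c * a t * exp (c * (A t - A T))) := by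
        refine integral_mono_on hT ((hE.mul hh).intervalIntegrable_of_Icc hT)
          (hcaE.const_mul _) fun t ht => ?_
        have hUa : h t ≤ U / D₁ * a t := by
          rw [div_mul_eq_mul_div, le_div_iff₀ hD₁]
          nlinarith [hhU t ht, haD₁ t ht]
        calc exp (c * (A t - A T)) * h t ≤ exp (c * (A t - A T)) * (U / D₁ * a t) := by gcongr
          _ = _ := by field_simp
    _ = U / D₁ / c * (1 - exp (-(c * A T))) := by
        rw [intervalIntegral.integral_const_mul, integral_mul_exp_mul_primitive_sub hT ha hA]
    _ ≤ U / D₁ / c := by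
        have := exp_pos (-(c * A T))
        exact mul_le_of_le_one_right (by positivity) (by linarith)

theorem le_integral_exp_mul_primitive_sub_mul {h : ℝ → ℝ} {D₁ D₂ L c : ℝ} (hT : 0 ≤ T)
    (ha : ContinuousOn a (Icc 0 T)) (hA : ∀ t, A t = ∫ s in (0 : ℝ)..t, a s)
    (hD₁ : 0 ≤ D₁) (hD₂ : 0 < D₂) (haD : ∀ t ∈ Icc 0 T, D₁ ≤ a t ∧ a t ≤ D₂)
    (hh : ContinuousOn h (Icc 0 T)) (hL : 0 ≤ L) (hLh : ∀ t ∈ Icc 0 T, L ≤ h t) (hc : 1 ≤ c) :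
    L * (1 - exp (-(D₁ * T))) / D₂ / c ≤ ∫ t in (0 : ℝ)..T, exp (c * (A t - A T)) * h t := by
  have hE := continuousOn_exp_mul_primitive_sub hT ha hA c
  have hcaE : IntervalIntegrable (fun t => c * a t * exp (c * (A t - A T))) volume 0 T :=
    ((continuousOn_const.mul ha).mul hE).intervalIntegrable_of_Icc hT
  have hAT : D₁ * T ≤ A T := by
    calc D₁ * T = ∫ _ in (0 : ℝ)..T, D₁ := by simp [mul_comm]
      _ ≤ A T := hA T ▸ integral_mono_on hT intervalIntegrable_const
          (ha.intervalIntegrable_of_Icc hT) fun t ht => (haD t ht).1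
  calc L * (1 - exp (-(D₁ * T))) / D₂ / c
      ≤ L / D₂ / c * (1 - exp (-(c * A T))) := by
        have hcAT : D₁ * T ≤ c * A T :=
          hAT.trans (le_mul_of_one_le_left ((mul_nonneg hD₁ hT).trans hAT) hc)
        rw [mul_div_right_comm, mul_div_right_comm]
        gcongr
    _ = ∫ t in (0 : ℝ)..T, L / D₂ / c * (c * a t * exp (c * (A t - A T))) := by
        rw [intervalIntegral.integral_const_mul, integral_mul_exp_mul_primitive_sub hT ha hA]
    _ ≤ ∫ t in (0 : ℝ)..T, exp (c * (A t - A T)) * h t := by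
        refine integral_mono_on hT (hcaE.const_mul _) ((hE.mul hh).intervalIntegrable_of_Icc hT)
          fun t ht => ?_
        have hLa : L / D₂ * a t ≤ h t := by
          rw [div_mul_eq_mul_div, div_le_iff₀ hD₂]
          nlinarith [hLh t ht, haD t ht]
        calc L / D₂ / c * (c * a t * exp (c * (A t - A T)))
            = exp (c * (A t - A T)) * (L / D₂ * a t) := by field_simp
          _ ≤ _ := by gcongr

end ExpPrimitive

theorem rpow_one_sub_le_mul_one_add {y t : ℝ} (hy0 : 0 ≤ y) (hy1 : y ≤ 1) (ht : 0 ≤ t) :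
    t ^ (1 - y) ≤ y ^ y * (1 - y) ^ (1 - y) * (1 + t) := by
  rcases hy0.eq_or_lt with rfl | hy0
  · simp
  rcases hy1.eq_or_lt with rfl | hy1
  · simp [ht]
  have hw : 0 < 1 - y := sub_pos.2 hy1
  have amgm := geom_mean_le_arith_mean2_weighted hw.le hy0.le (div_nonneg ht hw.le)
    (one_div_nonneg.2 hy0.le) (sub_add_cancel 1 y)
  rw [mul_div_cancel₀ _ hw.ne', mul_one_div_cancel hy0.ne'] at amgm
  calc t ^ (1 - y) = ((1 - y) * (t / (1 - y))) ^ (1 - y) * (y * (1 / y)) ^ y := by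
        rw [mul_div_cancel₀ _ hw.ne', mul_one_div_cancel hy0.ne', one_rpow, mul_one]
    _ = y ^ y * (1 - y) ^ (1 - y) * ((t / (1 - y)) ^ (1 - y) * (1 / y) ^ y) := by
        rw [mul_rpow hw.le (div_nonneg ht hw.le), mul_rpow hy0.le (one_div_nonneg.2 hy0.le)]
        ring
    _ ≤ y ^ y * (1 - y) ^ (1 - y) * (1 + t) := by
        gcongr
        linarith

theorem sq_mul_rpow_div_sq_add_sq_le {μ x y : ℝ} (hμ : 0 < μ) (hx : 0 ≤ x) (hy0 : 0 ≤ y)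
    (hy1 : y ≤ 1) :
    μ ^ 2 * x ^ (2 * (1 - y)) / (μ ^ 2 + x ^ 2) ≤
      y ^ y * (1 - y) ^ (1 - y) * μ ^ (2 * (1 - y)) := by
  have key := rpow_one_sub_le_mul_one_add hy0 hy1 (sq_nonneg (x / μ))
  have hpow : ((x / μ) ^ 2) ^ (1 - y) = x ^ (2 * (1 - y)) / μ ^ (2 * (1 - y)) := by
    rw [← rpow_natCast, ← rpow_mul (div_nonneg hx hμ.le), div_rpow hx hμ.le, Nat.cast_ofNat]
  rw [hpow, div_le_iff₀ (by positivity)] at key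
  rw [div_le_iff₀ (by positivity)]
  refine (mul_le_mul_of_nonneg_left key (sq_nonneg μ)).trans_eq ?_
  field_simp

theorem one_div_le_rpow_mul_one_add_rpow {N x c k : ℝ} (hN : 0 < N) (hc : 0 < c) (hk : 0 ≤ k)
    (hx : c / N ≤ x) : 1 / N ≤ (x / c) ^ (k + 1) * (1 + N) ^ k := by
  have hNx : 1 / N ≤ x / c := by rwa [le_div_iff₀ hc, one_div_mul_eq_div]
  calc 1 / N = (1 / N) ^ (k + 1) * N ^ k := by
        rw [one_div, inv_rpow hN.le, rpow_add_one hN.ne']; field_simp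
    _ ≤ (x / c) ^ (k + 1) * (1 + N) ^ k := by
        gcongr
        · exact rpow_nonneg ((one_div_nonneg.2 hN.le).trans hNx) _
        · linarith

theorem sq_div_sq_add_sq_mul_le {μ x p N c₁ c₂ k : ℝ} (hμ : 0 < μ) (hk0 : 0 ≤ k) (hk1 : k ≤ 1)
    (hc₁ : 0 < c₁) (hc₂ : 0 ≤ c₂) (hN : 0 < N) (hx : c₁ / N ≤ x) (hp : p ≤ c₂ / N) :
    μ ^ 2 / (μ ^ 2 + x ^ 2) * p ≤
      c₂ / c₁ ^ (k + 1) * (((1 - k) / 2) ^ ((1 - k) / 2) * (1 - (1 - k) / 2) ^ (1 - (1 - k) / 2)) *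
        μ ^ (k + 1) * (1 + N) ^ k := by
  have hx0 : 0 < x := (div_pos hc₁ hN).trans_le hx
  have hfilter := sq_mul_rpow_div_sq_add_sq_le hμ hx0.le (y := (1 - k) / 2) (by linarith)
    (by linarith)
  rw [show 2 * (1 - (1 - k) / 2) = k + 1 by ring] at hfilter
  calc μ ^ 2 / (μ ^ 2 + x ^ 2) * p ≤ μ ^ 2 / (μ ^ 2 + x ^ 2) * (c₂ * (1 / N)) := by
        rw [mul_one_div]; gcongr
    _ ≤ μ ^ 2 / (μ ^ 2 + x ^ 2) * (c₂ * ((x / c₁) ^ (k + 1) * (1 + N) ^ k)) := by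
        gcongr; exact one_div_le_rpow_mul_one_add_rpow hN hc₁ hk0 hx
    _ = c₂ / c₁ ^ (k + 1) * (μ ^ 2 * x ^ (k + 1) / (μ ^ 2 + x ^ 2)) * (1 + N) ^ k := by
        rw [div_rpow hx0.le hc₁.le]; ring
    _ ≤ c₂ / c₁ ^ (k + 1) *
          (((1 - k) / 2) ^ ((1 - k) / 2) * (1 - (1 - k) / 2) ^ (1 - (1 - k) / 2) * μ ^ (k + 1)) *
          (1 + N) ^ k := by gcongr
    _ = _ := by ring

theorem sq_mul_le_of_le_mul_rpow {p q K k : ℝ} (hq : 0 ≤ q) (hp : 0 ≤ p) (hpK : p ≤ K * q ^ k)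
    (f : ℝ) : (p * f) ^ 2 ≤ K ^ 2 * (q ^ (2 * k) * f ^ 2) :=
  calc (p * f) ^ 2 = p ^ 2 * f ^ 2 := mul_pow _ _ _
    _ ≤ (K * q ^ k) ^ 2 * f ^ 2 := by gcongr
    _ = K ^ 2 * (q ^ (2 * k) * f ^ 2) := by
        rw [mul_pow, ← rpow_mul_natCast hq, Nat.cast_ofNat, mul_comm k]; ring

theorem discrepancy_sub_one_mul_le {ι : Type*} {r p q f gε : ι → ℝ} {k K Q M ε τ : ℝ}
    (hr : ∀ i, 0 ≤ r i ∧ r i ≤ 1) (hq : ∀ i, 0 ≤ q i) (hK : 0 ≤ K)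
    (hp : ∀ i, 0 ≤ p i ∧ p i ≤ K * q i ^ k) (hQ : 0 ≤ Q) (hrp : ∀ i, r i * p i ≤ Q * q i ^ k)
    (hfs : Summable fun i => q i ^ (2 * k) * f i ^ 2) (hfM : ∑' i, q i ^ (2 * k) * f i ^ 2 ≤ M ^ 2)
    (hM : 0 ≤ M) (hgε : Summable fun i => gε i ^ 2)
    (hnoise : √(∑' i, (p i * f i - gε i) ^ 2) ≤ ε) (hρ : √(∑' i, (r i * gε i) ^ 2) = τ * ε) :
    (τ - 1) * ε ≤ Q * M := by
  obtain ⟨hg, -⟩ := summable_sq_and_sqrt_tsum_le hK hfs fun i =>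
    sq_mul_le_of_le_mul_rpow (hq i) (hp i).1 (hp i).2 (f i)
  obtain ⟨-, hrg⟩ := summable_sq_and_sqrt_tsum_le (u := fun i => r i * (p i * f i)) hQ hfs
    fun i => by
      rw [← mul_assoc]
      exact sq_mul_le_of_le_mul_rpow (hq i) (mul_nonneg (hr i).1 (hp i).1) (hrp i) (f i)
  have htri := sqrt_tsum_sq_mul_le_add (fun i => abs_le.2 ⟨by linarith [(hr i).1], (hr i).2⟩) hg hgε
  have hfM' := mul_le_mul_of_nonneg_left ((sqrt_le_sqrt hfM).trans_eq (sqrt_sq hM)) hQ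
  linarith

theorem tikhonov_discrepancy_sub_one_mul_le {ι : Type*} {x p N f gε : ι → ℝ}
    {c₁ c₂ k M ε τ μ : ℝ} (hμ : 0 < μ) (hk0 : 0 ≤ k) (hk1 : k ≤ 1) (hc₁ : 0 < c₁) (hc₂ : 0 ≤ c₂)
    (hN : ∀ i, 1 ≤ N i) (hx : ∀ i, c₁ / N i ≤ x i) (hp : ∀ i, 0 ≤ p i ∧ p i ≤ c₂ / N i)
    (hfs : Summable fun i => (1 + N i) ^ (2 * k) * f i ^ 2)
    (hfM : ∑' i, (1 + N i) ^ (2 * k) * f i ^ 2 ≤ M ^ 2) (hM : 0 ≤ M)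
    (hgε : Summable fun i => gε i ^ 2) (hnoise : √(∑' i, (p i * f i - gε i) ^ 2) ≤ ε)
    (hρ : √(∑' i, (μ ^ 2 / (μ ^ 2 + x i ^ 2)) ^ 2 * gε i ^ 2) = τ * ε) :
    (τ - 1) * ε ≤
      c₂ / c₁ ^ (k + 1) * (((1 - k) / 2) ^ ((1 - k) / 2) * (1 - (1 - k) / 2) ^ (1 - (1 - k) / 2)) *
        μ ^ (k + 1) * M := by
  have hN0 : ∀ i, 0 < N i := fun i => one_pos.trans_le (hN i)
  have hweight : ∀ i, 1 ≤ (1 + N i) ^ k := fun i => one_le_rpow (by linarith [hN i]) hk0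
  have hH : 0 ≤ ((1 - k) / 2) ^ ((1 - k) / 2) * (1 - (1 - k) / 2) ^ (1 - (1 - k) / 2) :=
    mul_nonneg (rpow_nonneg (by linarith) _) (rpow_nonneg (by linarith) _)
  refine discrepancy_sub_one_mul_le (r := fun i => μ ^ 2 / (μ ^ 2 + x i ^ 2))
    (fun i => ⟨by positivity, div_le_one_of_le₀ (le_add_of_nonneg_right (sq_nonneg _))
      (by positivity)⟩)
    (fun i => by linarith [hN i]) hc₂
    (fun i => ⟨(hp i).1, ((hp i).2.trans (div_le_self hc₂ (hN i))).trans
      (le_mul_of_one_le_right hc₂ (hweight i))⟩)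
    (by positivity)
    (fun i => sq_div_sq_add_sq_mul_le hμ hk0 hk1 hc₁ hc₂ (hN0 i) (hx i) (hp i).2)
    hfs hfM hM hgε hnoise (by simpa only [mul_pow] using hρ)

-- Because `0 ^ 0 = 1` for `Real.rpow`, the case distinction in the definition of `H` is vacuous.
theorem ite_rpow_self_mul_eq (y : ℝ) :
    (if y = 0 ∨ y = 1 then 1 else y ^ y * (1 - y) ^ (1 - y)) = y ^ y * (1 - y) ^ (1 - y) := by
  split_ifs with h
  · rcases h with rfl | rfl <;> simp
  · rfl

theorem stmt_16_general
    (T D₁ D₂ B₁ B₂ C₁ C₂ : ℝ) (hT : 0 < T) (hD₁ : 0 < D₁) (hD₁₂ : D₁ ≤ D₂)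
    (hB₁ : 0 < B₁) (hB₁₂ : B₁ ≤ B₂) (hC₁ : 0 < C₁)
    (a φ φε : ℝ → ℝ) (ha : ContinuousOn a (Set.Icc 0 T))
    (hφc : ContinuousOn φ (Set.Icc 0 T)) (hφεc : ContinuousOn φε (Set.Icc 0 T))
    (haB : ∀ t ∈ Set.Icc 0 T, D₁ ≤ a t ∧ a t ≤ D₂)
    (hφB : ∀ t ∈ Set.Icc 0 T, B₁ ≤ φ t ∧ φ t ≤ B₂)
    (hφεB : ∀ t ∈ Set.Icc 0 T, C₁ ≤ φε t ∧ φε t ≤ C₂)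
    (A Bf : ℝ → ℝ) (hA : ∀ t, A t = ∫ s in (0:ℝ)..t, a s)
    (hBf : ∀ t, Bf t = A t - A T)
    (Φ : ℕ → (ℝ → ℝ) → ℝ)
    (hΦ : ∀ (n : ℕ) (h : ℝ → ℝ), Φ n h = ∫ t in (0:ℝ)..T, Real.exp ((n:ℝ)^2 * Bf t) * h t)
    (H : ℝ → ℝ)
    (hH : ∀ y : ℝ, H y = if y = 0 ∨ y = 1 then 1 else y ^ y * (1 - y) ^ (1 - y))
    (k : ℝ) (hk0 : 0 < k) (hk1 : k ≤ 1) :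
    ∃ P : ℝ, 0 < P ∧
      ∀ (M : ℝ), 0 < M →
      ∀ (f g gε : ℕ → ℝ) (ε τ μ : ℝ),
        Summable (fun n : ℕ => ((1:ℝ) + ((n:ℝ)+1)^2) ^ (2*k) * (f (n+1))^2) →
        (∑' n : ℕ, ((1:ℝ) + ((n:ℝ)+1)^2) ^ (2*k) * (f (n+1))^2) ≤ M^2 →
        (∀ n : ℕ, g (n+1) = Φ (n+1) φ * f (n+1)) →
        Summable (fun n : ℕ => (gε (n+1))^2) →
        Real.sqrt (∑' n : ℕ, (g (n+1) - gε (n+1))^2) ≤ ε →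
        1 < τ → 0 < τ * ε →
        τ * ε < Real.sqrt (∑' n : ℕ, (gε (n+1))^2) →
        0 < μ →
        Real.sqrt (∑' n : ℕ, (μ^2 / (μ^2 + (Φ (n+1) φε)^2))^2 * (gε (n+1))^2) = τ * ε →
        ε / μ ^ (k+1) ≤ P / (τ - 1) * H ((1-k)/2) * M := by
  have hD₂ : 0 < D₂ := hD₁.trans_le hD₁₂
  have hN : ∀ n : ℕ, (1 : ℝ) ≤ ((n : ℝ) + 1) ^ 2 := fun n => one_le_pow₀ (by simp)
  have hΦexp : ∀ (n : ℕ) (h : ℝ → ℝ),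
      Φ (n + 1) h = ∫ t in (0 : ℝ)..T, exp (((n : ℝ) + 1) ^ 2 * (A t - A T)) * h t := by
    simp only [hΦ, hBf, Nat.cast_add_one, implies_true]
  set c₁ := C₁ * (1 - exp (-(D₁ * T))) / D₂
  set c₂ := B₂ / D₁
  have hc₁ : 0 < c₁ := by
    have : 0 < 1 - exp (-(D₁ * T)) := sub_pos.2 (exp_lt_one_iff.2 (by nlinarith))
    positivity
  have hc₂ : 0 < c₂ := div_pos (hB₁.trans_le hB₁₂) hD₁
  have hΦφ : ∀ n : ℕ, 0 ≤ Φ (n + 1) φ ∧ Φ (n + 1) φ ≤ c₂ / ((n : ℝ) + 1) ^ 2 := fun n => by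
    rw [hΦexp]
    exact ⟨integral_nonneg hT.le fun t ht => mul_nonneg (exp_pos _).le (hB₁.le.trans (hφB t ht).1),
      integral_exp_mul_primitive_sub_mul_le hT.le ha hA hD₁ (fun t ht => (haB t ht).1) hφc
        (hB₁.trans_le hB₁₂).le (fun t ht => (hφB t ht).2) (by positivity)⟩
  have hΦφε : ∀ n : ℕ, c₁ / ((n : ℝ) + 1) ^ 2 ≤ Φ (n + 1) φε := fun n =>
    hΦexp n φε ▸ le_integral_exp_mul_primitive_sub_mul hT.le ha hA hD₁.le hD₂ haB hφεc hC₁.le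
      (fun t ht => (hφεB t ht).1) (hN n)
  refine ⟨c₂ / c₁ ^ (k + 1), by positivity, ?_⟩
  intro M hM f g gε ε τ μ hfs hfM hg hgεs hnoise hτ _ _ hμ hρ
  have key := tikhonov_discrepancy_sub_one_mul_le (N := fun n : ℕ => ((n : ℝ) + 1) ^ 2) hμ hk0.le
    hk1 hc₁ hc₂.le hN hΦφε hΦφ hfs hfM hM.le hgεs (by simpa only [hg] using hnoise) hρ
  rw [hH, ite_rpow_self_mul_eq, div_le_iff₀ (rpow_pos_of_pos hμ _), div_mul_eq_mul_div,
    div_mul_eq_mul_div, div_mul_eq_mul_div, le_div_iff₀ (by linarith)]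
  linarith

/-- Lemma 6: for `k ∈ (0,1]`, there is a constant `P > 0` depending only on
`k, T, B₁, B₂, C₁, C₂, D₁, D₂` such that whenever the a priori bound with constant `M > 0`,
the noise assumptions, `τ > 1`, `0 < τε < ‖g^ε‖` hold and `μ > 0` solves `ρ(μ) = τε`, one has
`ε/μ^{k+1} ≤ (P/(τ−1)) · H((1−k)/2) · M`. -/
theorem stmt_16
    (T D₁ D₂ B₁ B₂ C₁ C₂ : ℝ) (hT : 0 < T) (hD₁ : 0 < D₁) (hD₁₂ : D₁ ≤ D₂)
    (hB₁ : 0 < B₁) (hB₁₂ : B₁ ≤ B₂) (hC₁ : 0 < C₁) (hC₁₂ : C₁ ≤ C₂)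
    (a φ φε : ℝ → ℝ) (ha : ContinuousOn a (Set.Icc 0 T))
    (hφc : ContinuousOn φ (Set.Icc 0 T)) (hφεc : ContinuousOn φε (Set.Icc 0 T))
    (haB : ∀ t ∈ Set.Icc 0 T, D₁ ≤ a t ∧ a t ≤ D₂)
    (hφB : ∀ t ∈ Set.Icc 0 T, B₁ ≤ φ t ∧ φ t ≤ B₂)
    (hφεB : ∀ t ∈ Set.Icc 0 T, C₁ ≤ φε t ∧ φε t ≤ C₂)
    (A Bf : ℝ → ℝ) (hA : ∀ t, A t = ∫ s in (0:ℝ)..t, a s)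
    (hBf : ∀ t, Bf t = A t - A T)
    (Φ : ℕ → (ℝ → ℝ) → ℝ)
    (hΦ : ∀ (n : ℕ) (h : ℝ → ℝ), Φ n h = ∫ t in (0:ℝ)..T, Real.exp ((n:ℝ)^2 * Bf t) * h t)
    (H : ℝ → ℝ)
    (hH : ∀ y : ℝ, H y = if y = 0 ∨ y = 1 then 1 else y ^ y * (1 - y) ^ (1 - y))
    (k : ℝ) (hk0 : 0 < k) (hk1 : k ≤ 1) :
    ∃ P : ℝ, 0 < P ∧
      ∀ (M : ℝ), 0 < M →
      ∀ (f g gε : ℕ → ℝ) (ε τ μ : ℝ),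
        Summable (fun n : ℕ => ((1:ℝ) + ((n:ℝ)+1)^2) ^ (2*k) * (f (n+1))^2) →
        (∑' n : ℕ, ((1:ℝ) + ((n:ℝ)+1)^2) ^ (2*k) * (f (n+1))^2) ≤ M^2 →
        (∀ n : ℕ, g (n+1) = Φ (n+1) φ * f (n+1)) →
        Summable (fun n : ℕ => (gε (n+1))^2) →
        Real.sqrt (∑' n : ℕ, (g (n+1) - gε (n+1))^2) ≤ ε →
        1 < τ → 0 < τ * ε →
        τ * ε < Real.sqrt (∑' n : ℕ, (gε (n+1))^2) →
        0 < μ →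
        Real.sqrt (∑' n : ℕ, (μ^2 / (μ^2 + (Φ (n+1) φε)^2))^2 * (gε (n+1))^2) = τ * ε →
        ε / μ ^ (k+1) ≤ P / (τ - 1) * H ((1-k)/2) * M :=
  stmt_16_general T D₁ D₂ B₁ B₂ C₁ C₂ hT hD₁ hD₁₂ hB₁ hB₁₂ hC₁ a φ φε ha hφc hφεc haB hφB hφεB A Bf
    hA hBf Φ hΦ H hH k hk0 hk1
end

section
/- Let k > 0, M ≥ 0, let (f_n)_{n≥1} be a real sequence with Σ_{n≥1} (1+n²)^{2k} f_n² ≤ M², and set g_n = Φ(n,φ) f_n. Then Σ_{n≥1} (Φ(n,φ))^{−2(k+1)} g_n² ≤ (D₂ / (B₁(1 − e^{−D₁T})))^{2k} · M². -/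
open intervalIntegral Real

private lemma integral_exp_mul_real {c : ℝ} (hc : c ≠ 0) (a b : ℝ) :
    (∫ x in a..b, Real.exp (c * x)) = (Real.exp (c * b) - Real.exp (c * a)) / c := by
  have D : ∀ x : ℝ, HasDerivAt (fun y : ℝ => Real.exp (c * y) / c) (Real.exp (c * x)) x := by
    intro x
    have h1 : HasDerivAt (fun y : ℝ => c * y) c x := by
      simpa using (hasDerivAt_id x).const_mul c
    have h2 := (h1.exp).div_const c
    simpa [mul_comm, mul_div_cancel_left₀ _ hc] using h2
  rw [intervalIntegral.integral_eq_sub_of_hasDerivAt (fun x _ => D x)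
    ((Real.continuous_exp.comp (continuous_const.mul continuous_id)).continuousOn.intervalIntegrable)]
  ring

/-- estimate of `L₃`/`L₆`: if `Σ (1+n²)^{2k} f_n² ≤ M²` and `g_n = Φ(n,φ) f_n`,
then `Σ (Φ(n,φ))^{−2(k+1)} g_n² ≤ (D₂/(B₁(1−e^{−D₁T})))^{2k} · M²`. -/
theorem stmt_17
    (T D₁ D₂ B₁ B₂ : ℝ) (hT : 0 < T) (hD₁ : 0 < D₁) (hD₁₂ : D₁ ≤ D₂)
    (hB₁ : 0 < B₁) (hB₁₂ : B₁ ≤ B₂)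
    (a φ : ℝ → ℝ) (ha : ContinuousOn a (Set.Icc 0 T)) (hφc : ContinuousOn φ (Set.Icc 0 T))
    (haB : ∀ t ∈ Set.Icc 0 T, D₁ ≤ a t ∧ a t ≤ D₂)
    (hφB : ∀ t ∈ Set.Icc 0 T, B₁ ≤ φ t ∧ φ t ≤ B₂)
    (A Bf : ℝ → ℝ) (hA : ∀ t, A t = ∫ s in (0:ℝ)..t, a s)
    (hBf : ∀ t, Bf t = A t - A T)
    (Φ : ℕ → (ℝ → ℝ) → ℝ)
    (hΦ : ∀ (n : ℕ) (h : ℝ → ℝ), Φ n h = ∫ t in (0:ℝ)..T, Real.exp ((n:ℝ)^2 * Bf t) * h t)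
    (k M : ℝ) (hk : 0 < k) (hM : 0 ≤ M)
    (f g : ℕ → ℝ)
    (hwsum : Summable (fun n : ℕ => ((1:ℝ) + ((n:ℝ)+1)^2) ^ (2*k) * (f (n+1))^2))
    (hbound : (∑' n : ℕ, ((1:ℝ) + ((n:ℝ)+1)^2) ^ (2*k) * (f (n+1))^2) ≤ M^2)
    (hg : ∀ n : ℕ, g (n+1) = Φ (n+1) φ * f (n+1)) :
    (∑' n : ℕ, (Φ (n+1) φ) ^ (-(2*(k+1))) * (g (n+1))^2) ≤
      (D₂ / (B₁ * (1 - Real.exp (-D₁ * T)))) ^ (2*k) * M^2 := by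
  have hD₂ : 0 < D₂ := hD₁.trans_le hD₁₂
  -- the constant E = B₁(1 - e^{-D₁ T}) > 0
  set E : ℝ := B₁ * (1 - Real.exp (-D₁ * T)) with hE
  have hEpos : 0 < E := by
    apply mul_pos hB₁
    have : Real.exp (-D₁ * T) < 1 := by
      apply Real.exp_lt_one_iff.mpr
      nlinarith
    linarith
  -- interval integrability of a on subintervals of [0, T]
  have haInt : ∀ t ∈ Set.Icc (0:ℝ) T, IntervalIntegrable a MeasureTheory.volume t T := by
    intro t ht
    apply (ha.mono _).intervalIntegrable
    rw [Set.uIcc_of_le ht.2]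
    exact Set.Icc_subset_Icc ht.1 le_rfl
  -- Bf lower bound: Bf t ≥ D₂ * (t - T) on [0,T]
  have hBflb : ∀ t ∈ Set.Icc (0:ℝ) T, D₂ * (t - T) ≤ Bf t := by
    intro t ht
    rw [hBf, hA, hA]
    have hsplit : (∫ s in (0:ℝ)..t, a s) - (∫ s in (0:ℝ)..T, a s) = -(∫ s in t..T, a s) := by
      rw [← intervalIntegral.integral_add_adjacent_intervals
        ((ha.mono ?_).intervalIntegrable) (haInt t ht)]
      · ring
      · rw [Set.uIcc_of_le ht.1]; exact Set.Icc_subset_Icc le_rfl ht.2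
    rw [hsplit]
    have hle : (∫ s in t..T, a s) ≤ ∫ s in t..T, D₂ := by
      apply intervalIntegral.integral_mono_on ht.2 (haInt t ht) intervalIntegrable_const
      intro x hx
      exact (haB x ⟨ht.1.trans hx.1, hx.2⟩).2
    rw [intervalIntegral.integral_const, smul_eq_mul] at hle
    nlinarith
  -- continuity of Bf (hence of the integrand) on [0,T]
  have hBfc : ContinuousOn Bf (Set.Icc 0 T) := by
    have hAc : ContinuousOn (fun t => ∫ s in (0:ℝ)..t, a s) (Set.Icc 0 T) := by
      have := intervalIntegral.continuousOn_primitive_interval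
        (a := (0:ℝ)) (b := T) (μ := MeasureTheory.volume) (f := a) ?_
      · rwa [Set.uIcc_of_le hT.le] at this
      · rw [Set.uIcc_of_le hT.le]
        exact ha.integrableOn_Icc
    have : ContinuousOn (fun t => (∫ s in (0:ℝ)..t, a s) - A T) (Set.Icc 0 T) :=
      hAc.sub continuousOn_const
    apply this.congr
    intro t ht
    rw [hBf, hA]
  -- main lower bound on Φ
  have hΦlb : ∀ n : ℕ, E / (((n:ℝ)+1)^2 * D₂) ≤ Φ (n+1) φ := by
    intro n
    set m : ℝ := (n:ℝ) + 1 with hm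
    have hm1 : (1:ℝ) ≤ m := by
      rw [hm]; have : (0:ℝ) ≤ (n:ℝ) := Nat.cast_nonneg n; linarith
    have hmsq : (1:ℝ) ≤ m^2 := one_le_pow₀ hm1
    set c : ℝ := m^2 * D₂ with hc
    have hcpos : 0 < c := by positivity
    rw [hΦ]
    have hcast : ((n+1 : ℕ) : ℝ) = m := by push_cast [hm]; ring
    rw [hcast]
    -- pointwise bound
    have hpt : ∀ t ∈ Set.Icc (0:ℝ) T,
        B₁ * Real.exp (c * (t - T)) ≤ Real.exp (m^2 * Bf t) * φ t := by
      intro t ht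
      have h1 : c * (t - T) ≤ m^2 * Bf t := by
        have := hBflb t ht
        have h2 : m^2 * (D₂ * (t - T)) ≤ m^2 * Bf t :=
          mul_le_mul_of_nonneg_left this (by positivity)
        have h3 : c * (t - T) = m^2 * (D₂ * (t - T)) := by rw [hc]; ring
        linarith
      have h2 : Real.exp (c * (t - T)) ≤ Real.exp (m^2 * Bf t) := Real.exp_le_exp.mpr h1
      have h3 : B₁ ≤ φ t := (hφB t ht).1
      nlinarith [Real.exp_pos (c * (t - T)), Real.exp_pos (m^2 * Bf t)]
    -- integrate the bound
    have hInt1 : IntervalIntegrable (fun t => B₁ * Real.exp (c * (t - T)))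
        MeasureTheory.volume 0 T := by
      exact (continuous_const.mul (Real.continuous_exp.comp
        (continuous_const.mul (continuous_id.sub continuous_const)))).intervalIntegrable _ _
    have hInt2 : IntervalIntegrable (fun t => Real.exp (m^2 * Bf t) * φ t)
        MeasureTheory.volume 0 T := by
      apply ContinuousOn.intervalIntegrable
      rw [Set.uIcc_of_le hT.le]
      exact ((Real.continuous_exp.comp_continuousOn (hBfc.const_smul (m^2))).mul hφc)
    have hmono := intervalIntegral.integral_mono_on hT.le hInt1 hInt2 hpt
    -- compute the left integral
    have hcomp : (∫ t in (0:ℝ)..T, B₁ * Real.exp (c * (t - T)))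
        = B₁ * ((1 - Real.exp (-c * T)) / c) := by
      have : (∫ t in (0:ℝ)..T, Real.exp (c * (t - T)))
          = Real.exp (-(c*T)) * ∫ t in (0:ℝ)..T, Real.exp (c * t) := by
        rw [← intervalIntegral.integral_const_mul]
        congr 1; ext t
        rw [← Real.exp_add]; ring_nf
      rw [intervalIntegral.integral_const_mul, this, integral_exp_mul_real hcpos.ne' 0 T,
        mul_zero, Real.exp_zero]
      have key : Real.exp (-(c*T)) * (Real.exp (c*T) - 1) = 1 - Real.exp (-c*T) := by
        rw [mul_sub, ← Real.exp_add, mul_one, neg_add_cancel, Real.exp_zero, neg_mul]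
      rw [show Real.exp (-(c*T)) * ((Real.exp (c*T) - 1)/c)
          = (Real.exp (-(c*T)) * (Real.exp (c*T) - 1))/c from (mul_div_assoc _ _ _).symm, key]
    rw [hcomp] at hmono
    refine le_trans ?_ hmono
    have hexp : Real.exp (-c * T) ≤ Real.exp (-D₁ * T) := by
      apply Real.exp_le_exp.mpr
      have hDc : D₁ ≤ c := le_trans hD₁₂ (le_mul_of_one_le_left hD₂.le hmsq)
      nlinarith
    have hEle : E ≤ B₁ * (1 - Real.exp (-c * T)) := by
      rw [hE]; nlinarith
    calc E / (m^2 * D₂) = E / c := by rw [hc]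
      _ ≤ (B₁ * (1 - Real.exp (-c*T))) / c := by gcongr
      _ = B₁ * ((1 - Real.exp (-c*T))/c) := by ring
  have hΦpos : ∀ n : ℕ, 0 < Φ (n+1) φ := fun n =>
    lt_of_lt_of_le (by positivity) (hΦlb n)
  -- termwise bound
  set K : ℝ := (D₂ / E) ^ (2*k) with hK
  have hterm : ∀ n : ℕ, (Φ (n+1) φ) ^ (-(2*(k+1))) * (g (n+1))^2 ≤
      K * (((1:ℝ) + ((n:ℝ)+1)^2) ^ (2*k) * (f (n+1))^2) := by
    intro n
    set P : ℝ := Φ (n+1) φ with hP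
    have hPpos : 0 < P := hΦpos n
    rw [hg n, mul_pow, ← mul_assoc]
    have hred : P ^ (-(2*(k+1))) * P^2 = P ^ (-(2*k)) := by
      rw [← Real.rpow_natCast P 2, ← Real.rpow_add hPpos]
      norm_num
      ring_nf
    -- P^(-2k) ≤ K * (1+(n+1)²)^(2k)
    have hmain : P ^ (-(2*k)) ≤ K * ((1:ℝ) + ((n:ℝ)+1)^2) ^ (2*k) := by
      have hPinv : P⁻¹ ≤ (((n:ℝ)+1)^2 * D₂) / E := by
        have h0 : 0 < E / (((n:ℝ)+1)^2 * D₂) := by positivity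
        have h1 := inv_anti₀ h0 (hΦlb n)
        rwa [inv_div] at h1
      have h2k : (0:ℝ) ≤ 2*k := by linarith
      have hmono2 := Real.rpow_le_rpow (by positivity : (0:ℝ) ≤ P⁻¹) hPinv h2k
      have hLeq : P ^ (-(2*k)) = (P⁻¹) ^ (2*k) := by
        rw [Real.rpow_neg hPpos.le, Real.inv_rpow hPpos.le]
      rw [hLeq]
      refine le_trans hmono2 ?_
      calc ((((n:ℝ)+1)^2 * D₂)/E) ^ (2*k)
          = ((((n:ℝ)+1)^2) ^ (2*k)) * (D₂/E) ^ (2*k) := by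
            rw [← Real.mul_rpow (by positivity) (by positivity)]
            congr 1; ring
        _ ≤ ((1 + ((n:ℝ)+1)^2) ^ (2*k)) * (D₂/E) ^ (2*k) := by
            apply mul_le_mul_of_nonneg_right _ (by positivity)
            exact Real.rpow_le_rpow (by positivity) (by nlinarith) h2k
        _ = K * ((1:ℝ) + ((n:ℝ)+1)^2) ^ (2*k) := by rw [hK]; ring
    calc P ^ (-(2*(k+1))) * P^2 * (f (n+1))^2 
        = P ^ (-(2*k)) * (f (n+1))^2 := by rw [hred]
      _ ≤ K * ((1:ℝ) + ((n:ℝ)+1)^2) ^ (2*k) * (f (n+1))^2 := by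
          apply mul_le_mul_of_nonneg_right hmain (sq_nonneg _)
      _ = K * (((1:ℝ) + ((n:ℝ)+1)^2) ^ (2*k) * (f (n+1))^2) := by ring
  -- sum up
  have hRsum : Summable (fun n : ℕ => K * (((1:ℝ) + ((n:ℝ)+1)^2) ^ (2*k) * (f (n+1))^2)) :=
    hwsum.mul_left K
  have hnn : ∀ n : ℕ, 0 ≤ (Φ (n+1) φ) ^ (-(2*(k+1))) * (g (n+1))^2 := by
    intro n
    apply mul_nonneg (Real.rpow_nonneg (hΦpos n).le _) (sq_nonneg _)
  have hLsum : Summable (fun n : ℕ => (Φ (n+1) φ) ^ (-(2*(k+1))) * (g (n+1))^2) :=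
    Summable.of_nonneg_of_le hnn hterm hRsum
  calc (∑' n : ℕ, (Φ (n+1) φ) ^ (-(2*(k+1))) * (g (n+1))^2)
      ≤ ∑' n : ℕ, K * (((1:ℝ) + ((n:ℝ)+1)^2) ^ (2*k) * (f (n+1))^2) :=
        Summable.tsum_le_tsum hterm hLsum hRsum
    _ = K * ∑' n : ℕ, ((1:ℝ) + ((n:ℝ)+1)^2) ^ (2*k) * (f (n+1))^2 := tsum_mul_left
    _ ≤ K * M^2 := by
        apply mul_le_mul_of_nonneg_left hbound
        rw [hK]; positivity
end

section
/- Let k > 1, M > 0 and τ > 1, and fix T, B₁, B₂, C₁, C₂, D₁, D₂ as in the context. There exists a constant Q > 0, depending only on k, τ, M, T, B₁, B₂, C₁, C₂, D₁, D₂, such that the following holds: for every real sequence (f_n)_{n≥1} with Σ_{n≥1} (1+n²)^{2k} f_n² ≤ M², g_n = Φ(n,φ) f_n, every square-summable (g_n^ε)_{n≥1} with ‖g − g^ε‖ ≤ ε and ‖φ − φ_ε‖_{L²(0,T)} ≤ ε, where 0 < τε < ‖g^ε‖, if μ > 0 is the (unique) solution of ρ(μ) = τε and (f_μ^ε)_n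 = Φ(n,φ_ε) g_n^ε / (μ² + Φ(n,φ_ε)²), then ‖f − f_μ^ε‖ ≤ Q · ε^{1/2}. -/
/-!
With `σₙ = Φ(n, φ)`, `sₙ = Φ(n, φ_ε)` and the filter `rₙ = μ² / (μ² + sₙ²)`, the error splits as
`f − f_μ^ε = r f + s ((s − σ) f + (g − g^ε)) / (μ² + s²)`, and `|s| / (μ² + s²) ≤ 1 / (2μ)` bounds
the second term by `(√T M + 1) ε / (2μ)`.

The kernel `e^{n² B}` has mass `Eₙ` between `T e^{−D₂T} / n²` and `T`, and `B₁ Eₙ ≤ σₙ ≤ B₂ Eₙ`,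
`sₙ ≥ C₁ Eₙ`; hence `rₙ σₙ ≤ μ² σₙ / sₙ² ≤ K μ² (1 + n²)` and `‖r g‖ ≤ K M μ²`. The discrepancy
equation `‖r g^ε‖ = τε` gives `(τ − 1) ε ≤ ‖r g‖ ≤ (τ + 1) ε`, so `μ ≳ √ε` and the second term
is `O(√ε)`.

For `r f`, split the indices: where `σₙ² ≥ ε`, `(rₙ fₙ)² ≤ (rₙ gₙ)² / ε`, which sums to `O(ε)`;
where `σₙ² < ε`, the index is so large that `(1 + n²)^{−2k} = O(ε^k)`, and `ε^k = O(ε)` since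
`k ≥ 1` and `τε < ‖g^ε‖ ≤ B₂ T M + ε` bounds `ε`.
-/

open Real Set MeasureTheory intervalIntegral

noncomputable def l2Norm (a : ℕ → ℝ) : ℝ := √(∑' n, a n ^ 2)

section L2Norm

variable {a b e : ℕ → ℝ} {c d : ℝ}

lemma l2Norm_nonneg (a : ℕ → ℝ) : 0 ≤ l2Norm a := sqrt_nonneg _

lemma sq_l2Norm (a : ℕ → ℝ) : l2Norm a ^ 2 = ∑' n, a n ^ 2 :=
  sq_sqrt (tsum_nonneg fun _ => sq_nonneg _)

lemma l2Norm_const_mul_abs (hc : 0 ≤ c) (b : ℕ → ℝ) :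
    l2Norm (fun n => c * |b n|) = c * l2Norm b := by
  simp only [l2Norm, mul_pow, sq_abs, tsum_mul_left]
  rw [sqrt_mul (sq_nonneg c), sqrt_sq hc]

lemma summable_sq_of_abs_le_add (hb : Summable fun n => b n ^ 2)
    (he : Summable fun n => e n ^ 2) (h : ∀ n, |a n| ≤ c * |b n| + d * |e n|) :
    Summable fun n => a n ^ 2 := by
  refine ((hb.mul_left (2 * c ^ 2)).add (he.mul_left (2 * d ^ 2))).of_nonneg_of_le
    (fun n => sq_nonneg _) fun n => ?_
  calc a n ^ 2 = |a n| ^ 2 := (sq_abs _).symm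
    _ ≤ (c * |b n| + d * |e n|) ^ 2 := pow_le_pow_left₀ (abs_nonneg _) (h n) 2
    _ ≤ 2 * ((c * |b n|) ^ 2 + (d * |e n|) ^ 2) := add_sq_le
    _ = 2 * c ^ 2 * b n ^ 2 + 2 * d ^ 2 * e n ^ 2 := by simp only [mul_pow, sq_abs]; ring

lemma l2Norm_le_of_abs_le_add (hc : 0 ≤ c) (hd : 0 ≤ d) (hb : Summable fun n => b n ^ 2)
    (he : Summable fun n => e n ^ 2) (h : ∀ n, |a n| ≤ c * |b n| + d * |e n|) :
    l2Norm a ≤ c * l2Norm b + d * l2Norm e := by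
  have hsq : ∀ {c : ℝ} {b : ℕ → ℝ}, Summable (fun n => b n ^ 2) →
      Summable fun n => (c * |b n|) ^ (2 : ℝ) := fun hb => by
    simpa only [rpow_two, mul_pow, sq_abs] using hb.mul_left _
  obtain ⟨hsum, hminkowski⟩ := Real.Lp_add_le_tsum_of_nonneg one_le_two
    (fun n => mul_nonneg hc (abs_nonneg (b n))) (fun n => mul_nonneg hd (abs_nonneg (e n)))
    (hsq hb) (hsq he)
  simp only [rpow_two, ← sqrt_eq_rpow] at hsum hminkowski
  have hpt : ∀ n, a n ^ 2 ≤ (c * |b n| + d * |e n|) ^ 2 := fun n =>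
    sq_abs (a n) ▸ pow_le_pow_left₀ (abs_nonneg _) (h n) 2
  rw [← l2Norm_const_mul_abs hc, ← l2Norm_const_mul_abs hd]
  exact (sqrt_le_sqrt ((summable_sq_of_abs_le_add hb he h).tsum_le_tsum hpt hsum)).trans
    hminkowski

lemma summable_sq_of_abs_le_mul (hb : Summable fun n => b n ^ 2) (h : ∀ n, |a n| ≤ c * |b n|) :
    Summable fun n => a n ^ 2 :=
  summable_sq_of_abs_le_add (d := 0) hb hb (by simpa using h)

lemma l2Norm_le_mul_of_abs_le (hc : 0 ≤ c) (hb : Summable fun n => b n ^ 2)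
    (h : ∀ n, |a n| ≤ c * |b n|) : l2Norm a ≤ c * l2Norm b := by
  simpa using l2Norm_le_of_abs_le_add hc le_rfl hb hb (by simpa using h)

lemma summable_sq_of_abs_le (hb : Summable fun n => b n ^ 2) (h : ∀ n, |a n| ≤ |b n|) :
    Summable fun n => a n ^ 2 :=
  summable_sq_of_abs_le_mul (c := 1) hb (by simpa using h)

lemma l2Norm_le_of_abs_le (hb : Summable fun n => b n ^ 2) (h : ∀ n, |a n| ≤ |b n|) :
    l2Norm a ≤ l2Norm b := by
  simpa using l2Norm_le_mul_of_abs_le zero_le_one hb (c := 1) (by simpa using h)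

lemma summable_sq_sub (ha : Summable fun n => a n ^ 2) (hb : Summable fun n => b n ^ 2) :
    Summable fun n => (a n - b n) ^ 2 :=
  summable_sq_of_abs_le_add (c := 1) (d := 1) ha hb fun n => by simpa using abs_sub (a n) (b n)

end L2Norm

section Pointwise

variable {x σ s r b k K ε η μ E c T B₁ B₂ C₁ : ℝ}

lemma sq_div_sq_add_sq_nonneg (μ s : ℝ) : 0 ≤ μ ^ 2 / (μ ^ 2 + s ^ 2) := by positivity

lemma sq_div_sq_add_sq_le_one (μ s : ℝ) : μ ^ 2 / (μ ^ 2 + s ^ 2) ≤ 1 :=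
  div_le_one_of_le₀ (le_add_of_nonneg_right (sq_nonneg s)) (by positivity)

lemma abs_mul_le_abs_of_le_one (hr0 : 0 ≤ r) (hr1 : r ≤ 1) (y : ℝ) : |r * y| ≤ |y| := by
  rw [abs_mul, abs_of_nonneg hr0]
  exact mul_le_of_le_one_left (abs_nonneg y) hr1

lemma abs_le_abs_rpow_mul (hx : 1 ≤ x) (hk : 0 ≤ k) (f : ℝ) : |f| ≤ |x ^ k * f| := by
  rw [abs_mul, abs_of_nonneg (rpow_nonneg (zero_le_one.trans hx) k)]
  exact le_mul_of_one_le_left (abs_nonneg _) (one_le_rpow hx hk)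

lemma abs_div_sq_add_sq_le (hμ : 0 < μ) (s : ℝ) : |s / (μ ^ 2 + s ^ 2)| ≤ 1 / (2 * μ) := by
  rw [abs_div, abs_of_pos (by positivity : 0 < μ ^ 2 + s ^ 2),
    div_le_div_iff₀ (by positivity) (by positivity)]
  nlinarith [sq_nonneg (μ - |s|), sq_abs s]

lemma rpow_mul_sq (hx : 0 ≤ x) (k f : ℝ) : (x ^ k * f) ^ 2 = x ^ (2 * k) * f ^ 2 := by
  rw [mul_pow, ← rpow_natCast, ← rpow_mul hx, mul_comm k]
  norm_num

lemma sub_mul_div_sq_add_sq_eq (hμ : μ ≠ 0) (f g gε : ℝ) (hg : g = σ * f) :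
    f - s * gε / (μ ^ 2 + s ^ 2)
      = μ ^ 2 / (μ ^ 2 + s ^ 2) * f + s / (μ ^ 2 + s ^ 2) * ((s - σ) * f + (g - gε)) := by
  have : μ ^ 2 + s ^ 2 ≠ 0 := by positivity
  subst hg
  field_simp
  ring

lemma abs_filter_mul_le (hμ : 0 < μ) (hx : 1 ≤ x) (hk : 1 ≤ k) (hK : 0 ≤ K) (hσ : 0 ≤ σ)
    (hσK : σ ≤ K * x * s ^ 2) (f : ℝ) :
    |μ ^ 2 / (μ ^ 2 + s ^ 2) * (σ * f)| ≤ K * μ ^ 2 * |x ^ k * f| := by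
  have hden : 0 < μ ^ 2 + s ^ 2 := by positivity
  have hfilter : μ ^ 2 / (μ ^ 2 + s ^ 2) * σ ≤ K * μ ^ 2 * x := by
    rw [div_mul_eq_mul_div, div_le_iff₀ hden]
    nlinarith [mul_le_mul_of_nonneg_left hσK (sq_nonneg μ), mul_nonneg (mul_nonneg hK
      (zero_le_one.trans hx)) (pow_pos hμ 2).le, sq_nonneg μ]
  have hxk : x ≤ x ^ k := by simpa using rpow_le_rpow_of_exponent_le hx hk
  rw [← mul_assoc, abs_mul (_ * σ), abs_mul (x ^ k), abs_of_nonneg (rpow_nonneg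
    (zero_le_one.trans hx) k), abs_of_nonneg (mul_nonneg (sq_div_sq_add_sq_nonneg μ s) hσ),
    ← mul_assoc]
  exact mul_le_mul_of_nonneg_right (hfilter.trans
    (mul_le_mul_of_nonneg_left hxk (by positivity))) (abs_nonneg f)

/-- Split according to whether `ε ≤ σ ^ 2`; if not, the weight is large: `b ^ 2 < ε * x ^ 2`. -/
lemma sq_mul_le_sq_div_add (hε : 0 < ε) (hb : 0 < b) (hx : 0 < x) (hk : 0 ≤ k)
    (hσ : b / x ≤ σ) (hr0 : 0 ≤ r) (hr1 : r ≤ 1) (f : ℝ) :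
    (r * f) ^ 2 ≤ (r * (σ * f)) ^ 2 / ε + (ε / b ^ 2) ^ k * (x ^ k * f) ^ 2 := by
  rcases le_or_gt ε (σ ^ 2) with hlarge | hsmall
  · have : (r * f) ^ 2 ≤ (r * (σ * f)) ^ 2 / ε := by
      rw [le_div_iff₀ hε]
      nlinarith [mul_le_mul_of_nonneg_left hlarge (sq_nonneg (r * f))]
    exact le_add_of_le_of_nonneg this (by positivity)
  · have hbx : b ^ 2 < ε * x ^ 2 := by
      have := pow_le_pow_left₀ (div_pos hb hx).le hσ 2
      rw [div_pow, div_le_iff₀ (by positivity)] at this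
      nlinarith [pow_pos hx 2]
    have hrf : (r * f) ^ 2 ≤ f ^ 2 := by
      rw [mul_pow]; exact mul_le_of_le_one_left (sq_nonneg f) (pow_le_one₀ hr0 hr1)
    have hweight : 1 ≤ (ε / b ^ 2) ^ k * (x ^ 2) ^ k := by
      rw [← mul_rpow (by positivity) (by positivity)]
      refine one_le_rpow ?_ hk
      rw [div_mul_eq_mul_div, le_div_iff₀ (by positivity)]
      linarith
    calc (r * f) ^ 2 ≤ 1 * f ^ 2 := by rw [one_mul]; exact hrf
      _ ≤ (ε / b ^ 2) ^ k * (x ^ 2) ^ k * f ^ 2 :=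
        mul_le_mul_of_nonneg_right hweight (sq_nonneg f)
      _ = (ε / b ^ 2) ^ k * (x ^ k * f) ^ 2 := by
        rw [rpow_mul_sq hx.le, rpow_mul hx.le, rpow_two, mul_assoc]
      _ ≤ _ := le_add_of_nonneg_left (by positivity)

lemma div_two_mul_le_of_mul_le_sq (hη : 0 < η) (hε : 0 ≤ ε) (hμ : 0 < μ)
    (h : η * ε ≤ μ ^ 2) : ε / (2 * μ) ≤ √ε / (2 * √η) := by
  have hμ' : √η * √ε ≤ μ := by
    rw [← sqrt_mul hη.le, ← sqrt_sq hμ.le]; exact sqrt_le_sqrt h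
  rw [div_le_div_iff₀ (by positivity) (by positivity)]
  calc ε * (2 * √η) = 2 * √ε * (√η * √ε) := by
        rw [show 2 * √ε * (√η * √ε) = 2 * √η * (√ε * √ε) by ring, mul_self_sqrt hε]; ring
    _ ≤ 2 * √ε * μ := mul_le_mul_of_nonneg_left hμ' (by positivity)
    _ = √ε * (2 * μ) := by ring

lemma bounds_of_kernel_mass (hc : 0 < c) (hx : 0 < x) (hB₁ : 0 ≤ B₁) (hB₂ : 0 ≤ B₂) (hC₁ : 0 < C₁)
    (hE : c / x ≤ E) (hET : E ≤ T) (hσ₁ : B₁ * E ≤ σ) (hσ₂ : σ ≤ B₂ * E) (hs : C₁ * E ≤ s) :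
    B₁ * c / x ≤ σ ∧ σ ≤ B₂ * T ∧ σ ≤ B₂ / (C₁ ^ 2 * c) * x * s ^ 2 := by
  have hE0 : 0 < E := (div_pos hc hx).trans_le hE
  have hxE : c ≤ x * E := by rwa [div_le_iff₀ hx, mul_comm] at hE
  refine ⟨?_, hσ₂.trans (mul_le_mul_of_nonneg_left hET hB₂), hσ₂.trans ?_⟩
  · calc B₁ * c / x = B₁ * (c / x) := mul_div_assoc _ _ _
      _ ≤ σ := (mul_le_mul_of_nonneg_left hE hB₁).trans hσ₁
  · calc B₂ * E ≤ B₂ / (C₁ ^ 2 * c) * x * (C₁ * E) ^ 2 := by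
          rw [div_mul_eq_mul_div, div_mul_eq_mul_div, le_div_iff₀ (by positivity)]
          nlinarith [mul_le_mul_of_nonneg_left hxE
            (mul_nonneg hB₂ (mul_nonneg (sq_nonneg C₁) hE0.le))]
      _ ≤ B₂ / (C₁ ^ 2 * c) * x * s ^ 2 := by gcongr

end Pointwise

section Kernel

variable {a w h h₁ h₂ B φ φε : ℝ → ℝ} {T D c m x σ s B₁ B₂ C₁ ε t : ℝ}

lemma integral_sub_integral_eq_integral_from_right (ha : ContinuousOn a (Icc 0 T))
    (ht : t ∈ Icc 0 T) :
    (∫ s in (0:ℝ)..t, a s) - ∫ s in (0:ℝ)..T, a s = ∫ s in T..t, a s := by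
  have hint : ∀ u ∈ Icc 0 T, IntervalIntegrable a volume 0 u := fun u hu =>
    (ha.mono (Icc_subset_Icc_right hu.2)).intervalIntegrable_of_Icc hu.1
  exact integral_interval_sub_left (hint t ht) (hint T ⟨ht.1.trans ht.2, le_rfl⟩)

lemma kernel_exponent_bounds (hT : 0 ≤ T) (ha : ContinuousOn a (Icc 0 T))
    (ha0 : ∀ t ∈ Icc 0 T, 0 ≤ a t) (haD : ∀ t ∈ Icc 0 T, a t ≤ D)
    (hB : ∀ t ∈ Icc 0 T, B t = ∫ s in T..t, a s) :
    ContinuousOn B (Icc 0 T) ∧ (∀ t ∈ Icc 0 T, B t ≤ 0) ∧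
      ∀ t ∈ Icc 0 T, -(D * (T - t)) ≤ B t := by
  have hB' : ∀ t ∈ Icc 0 T, B t = -∫ s in t..T, a s := fun t ht => by rw [hB t ht, integral_symm]
  have hint : ∀ t ∈ Icc 0 T, IntervalIntegrable a volume t T := fun t ht =>
    (ha.mono (Icc_subset_Icc_left ht.1)).intervalIntegrable_of_Icc ht.2
  refine ⟨?_, fun t ht => ?_, fun t ht => ?_⟩
  · rw [← uIcc_of_le hT] at ha ⊢
    exact (continuousOn_primitive_interval' ha.intervalIntegrable right_mem_uIcc).congr
      (by rwa [uIcc_of_le hT])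
  · rw [hB' t ht, neg_nonpos]
    exact integral_nonneg ht.2 fun u hu => ha0 u ⟨ht.1.trans hu.1, hu.2⟩
  · rw [hB' t ht, neg_le_neg_iff]
    calc ∫ s in t..T, a s ≤ ∫ _ in t..T, D :=
          integral_mono_on ht.2 (hint t ht) intervalIntegrable_const fun u hu =>
            haD u ⟨ht.1.trans hu.1, hu.2⟩
      _ = D * (T - t) := by rw [intervalIntegral.integral_const, smul_eq_mul, mul_comm]

lemma integral_exp_mul_le (hT : 0 ≤ T) (hB : ContinuousOn B (Icc 0 T))
    (hB0 : ∀ t ∈ Icc 0 T, B t ≤ 0) (hm : 0 ≤ m) : ∫ t in (0:ℝ)..T, exp (m * B t) ≤ T := by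
  have hint : IntervalIntegrable (fun t => exp (m * B t)) volume 0 T :=
    ((continuousOn_const.mul hB).rexp).intervalIntegrable_of_Icc hT
  calc ∫ t in (0:ℝ)..T, exp (m * B t) ≤ ∫ _ in (0:ℝ)..T, 1 :=
        integral_mono_on hT hint intervalIntegrable_const fun t ht =>
          exp_le_one_iff.mpr (mul_nonpos_of_nonneg_of_nonpos hm (hB0 t ht))
    _ = T := by simp

/-- The integrand is at least `exp (-(D * T))` on the last `T / m` of the interval. -/
lemma le_integral_exp_mul (hT : 0 < T) (hD : 0 ≤ D) (hB : ContinuousOn B (Icc 0 T))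
    (hBD : ∀ t ∈ Icc 0 T, -(D * (T - t)) ≤ B t) (hm : 1 ≤ m) :
    T * exp (-(D * T)) / m ≤ ∫ t in (0:ℝ)..T, exp (m * B t) := by
  have hm0 : 0 < m := one_pos.trans_le hm
  set δ := T / m
  have hδ0 : 0 ≤ δ := by positivity
  have hδ : 0 ≤ T - δ := sub_nonneg.mpr (div_le_self hT.le hm)
  have hint : ∀ u v, 0 ≤ u → u ≤ v → v ≤ T →
      IntervalIntegrable (fun t => exp (m * B t)) volume u v := fun u v hu huv hv =>
    ((continuousOn_const.mul hB).rexp.mono (Icc_subset_Icc hu hv)).intervalIntegrable_of_Icc huv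
  have htail : δ * exp (-(D * T)) ≤ ∫ t in (T - δ)..T, exp (m * B t) := by
    calc δ * exp (-(D * T)) = ∫ _ in (T - δ)..T, exp (-(D * T)) := by simp
      _ ≤ ∫ t in (T - δ)..T, exp (m * B t) := by
        refine integral_mono_on (by linarith) intervalIntegrable_const
          (hint _ _ hδ (by linarith) le_rfl) fun t ht => exp_le_exp.mpr ?_
        have hBt := hBD t ⟨hδ.trans ht.1, ht.2⟩
        have hTt : m * (T - t) ≤ T := by
          have := mul_le_mul_of_nonneg_left (show T - t ≤ δ by linarith [ht.1]) hm0.le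
          rwa [mul_div_cancel₀ T hm0.ne'] at this
        nlinarith [mul_le_mul_of_nonneg_left hTt hD]
  have hhead : 0 ≤ ∫ t in (0:ℝ)..(T - δ), exp (m * B t) :=
    integral_nonneg hδ fun t _ => (exp_pos _).le
  rw [← integral_add_adjacent_intervals (hint 0 (T - δ) le_rfl hδ (by linarith))
    (hint _ _ hδ (by linarith) le_rfl)]
  calc T * exp (-(D * T)) / m = δ * exp (-(D * T)) := by ring
    _ ≤ _ := by linarith

lemma mul_integral_le_integral_mul (hT : 0 ≤ T) (hw : ContinuousOn w (Icc 0 T))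
    (hw0 : ∀ t ∈ Icc 0 T, 0 ≤ w t) (hh : ContinuousOn h (Icc 0 T))
    (hc : ∀ t ∈ Icc 0 T, c ≤ h t) :
    c * ∫ t in (0:ℝ)..T, w t ≤ ∫ t in (0:ℝ)..T, w t * h t := by
  rw [← intervalIntegral.integral_const_mul]
  exact integral_mono_on hT ((hw.intervalIntegrable_of_Icc hT).const_mul c)
    ((hw.mul hh).intervalIntegrable_of_Icc hT) fun t ht => by
      rw [mul_comm]; exact mul_le_mul_of_nonneg_left (hc t ht) (hw0 t ht)

lemma integral_mul_le_mul_integral (hT : 0 ≤ T) (hw : ContinuousOn w (Icc 0 T))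
    (hw0 : ∀ t ∈ Icc 0 T, 0 ≤ w t) (hh : ContinuousOn h (Icc 0 T))
    (hc : ∀ t ∈ Icc 0 T, h t ≤ c) :
    ∫ t in (0:ℝ)..T, w t * h t ≤ c * ∫ t in (0:ℝ)..T, w t := by
  rw [← intervalIntegral.integral_const_mul]
  exact integral_mono_on hT ((hw.mul hh).intervalIntegrable_of_Icc hT)
    ((hw.intervalIntegrable_of_Icc hT).const_mul c) fun t ht => by
      rw [mul_comm c]; exact mul_le_mul_of_nonneg_left (hc t ht) (hw0 t ht)

/-- Cauchy–Schwarz against `1`, via `|y| ≤ y ^ 2 / (2 * s) + s / 2` with `s = ε / √T`. -/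
lemma integral_abs_le_sqrt_mul (hT : 0 < T) (hε : 0 < ε) (hh : ContinuousOn h (Icc 0 T))
    (hL2 : √(∫ t in (0:ℝ)..T, h t ^ 2) ≤ ε) : ∫ t in (0:ℝ)..T, |h t| ≤ √T * ε := by
  set s := ε / √T
  have hs : 0 < s := div_pos hε (sqrt_pos.mpr hT)
  have hsq : ContinuousOn (fun t => h t ^ 2) (Icc 0 T) := hh.pow 2
  have hI : ∫ t in (0:ℝ)..T, h t ^ 2 ≤ ε ^ 2 := by
    rw [← sq_sqrt (integral_nonneg hT.le fun t _ => sq_nonneg (h t))]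
    exact pow_le_pow_left₀ (sqrt_nonneg _) hL2 2
  calc ∫ t in (0:ℝ)..T, |h t| ≤ ∫ t in (0:ℝ)..T, (h t ^ 2 / (2 * s) + s / 2) := by
        refine integral_mono_on hT.le (hh.abs.intervalIntegrable_of_Icc hT.le)
          ((hsq.div_const _).add continuousOn_const |>.intervalIntegrable_of_Icc hT.le)
          fun t _ => ?_
        rw [div_add_div _ _ (by positivity) two_ne_zero, le_div_iff₀ (by positivity)]
        nlinarith [sq_nonneg (|h t| - s), sq_abs (h t)]
    _ = (∫ t in (0:ℝ)..T, h t ^ 2) / (2 * s) + T * (s / 2) := by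
        rw [integral_add ((hsq.div_const _).intervalIntegrable_of_Icc hT.le)
          intervalIntegrable_const, intervalIntegral.integral_div,
          intervalIntegral.integral_const, smul_eq_mul, sub_zero]
    _ ≤ ε ^ 2 / (2 * s) + T * (s / 2) := by gcongr
    _ = √T * ε := by
        have := sq_sqrt hT.le
        simp only [s]
        field_simp
        rw [this]
        ring

lemma abs_integral_mul_sub_integral_mul_le (hT : 0 < T) (hε : 0 < ε)
    (hw : ContinuousOn w (Icc 0 T)) (hw0 : ∀ t ∈ Icc 0 T, 0 ≤ w t)
    (hw1 : ∀ t ∈ Icc 0 T, w t ≤ 1) (hh₁ : ContinuousOn h₁ (Icc 0 T))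
    (hh₂ : ContinuousOn h₂ (Icc 0 T)) (hL2 : √(∫ t in (0:ℝ)..T, (h₁ t - h₂ t) ^ 2) ≤ ε) :
    |(∫ t in (0:ℝ)..T, w t * h₁ t) - ∫ t in (0:ℝ)..T, w t * h₂ t| ≤ √T * ε := by
  have hsub : ContinuousOn (fun t => h₁ t - h₂ t) (Icc 0 T) := hh₁.sub hh₂
  have hi : ∀ {h}, ContinuousOn h (Icc 0 T) →
      IntervalIntegrable (fun t => w t * h t) volume 0 T := fun hh =>
    (hw.mul hh).intervalIntegrable_of_Icc hT.le
  rw [← integral_sub (hi hh₁) (hi hh₂)]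
  refine (abs_integral_le_integral_abs hT.le).trans
    (le_trans ?_ (integral_abs_le_sqrt_mul hT hε hsub hL2))
  refine integral_mono_on hT.le ((hi hh₁).sub (hi hh₂)).abs
    (hsub.abs.intervalIntegrable_of_Icc hT.le) fun t ht => ?_
  rw [← mul_sub, abs_mul, abs_of_nonneg (hw0 t ht)]
  exact mul_le_of_le_one_left (abs_nonneg _) (hw1 t ht)

lemma kernel_values_bounds (hT : 0 < T) (hD : 0 ≤ D) (hB₁ : 0 ≤ B₁) (hB₂ : 0 ≤ B₂)
    (hC₁ : 0 < C₁) (hBc : ContinuousOn B (Icc 0 T)) (hB0 : ∀ t ∈ Icc 0 T, B t ≤ 0)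
    (hBD : ∀ t ∈ Icc 0 T, -(D * (T - t)) ≤ B t) (hφc : ContinuousOn φ (Icc 0 T))
    (hφεc : ContinuousOn φε (Icc 0 T)) (hφ : ∀ t ∈ Icc 0 T, B₁ ≤ φ t ∧ φ t ≤ B₂)
    (hφε : ∀ t ∈ Icc 0 T, C₁ ≤ φε t) (hm : 1 ≤ m) (hmx : m ≤ x)
    (hσ : σ = ∫ t in (0:ℝ)..T, exp (m * B t) * φ t)
    (hs : s = ∫ t in (0:ℝ)..T, exp (m * B t) * φε t) :
    B₁ * (T * exp (-(D * T))) / x ≤ σ ∧ σ ≤ B₂ * T ∧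
      σ ≤ B₂ / (C₁ ^ 2 * (T * exp (-(D * T)))) * x * s ^ 2 := by
  have hker : ContinuousOn (fun t => exp (m * B t)) (Icc 0 T) := (continuousOn_const.mul hBc).rexp
  have hker0 : ∀ t ∈ Icc 0 T, 0 ≤ exp (m * B t) := fun _ _ => (exp_pos _).le
  subst hσ hs
  exact bounds_of_kernel_mass (by positivity) (one_pos.trans_le (hm.trans hmx)) hB₁ hB₂ hC₁
    ((div_le_div_of_nonneg_left (by positivity) (by linarith) hmx).trans
      (le_integral_exp_mul hT hD hBc hBD hm))
    (integral_exp_mul_le hT.le hBc hB0 (by linarith))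
    (mul_integral_le_integral_mul hT.le hker hker0 hφc fun t ht => (hφ t ht).1)
    (integral_mul_le_mul_integral hT.le hker hker0 hφc fun t ht => (hφ t ht).2)
    (mul_integral_le_integral_mul hT.le hker hker0 hφεc hφε)

end Kernel

section Regularization

variable {x σ s f g gε r : ℕ → ℝ} {k M K b β L C τ ε ε₀ μ : ℝ}

lemma summable_and_l2Norm_rpow_mul_le (hx : ∀ n, 0 ≤ x n)
    (hfs : Summable fun n => x n ^ (2 * k) * f n ^ 2)
    (hfM : ∑' n, x n ^ (2 * k) * f n ^ 2 ≤ M ^ 2) (hM : 0 ≤ M) :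
    (Summable fun n => (x n ^ k * f n) ^ 2) ∧ l2Norm (fun n => x n ^ k * f n) ≤ M := by
  simp only [l2Norm, rpow_mul_sq (hx _)]
  exact ⟨hfs, (sqrt_le_sqrt hfM).trans_eq (sqrt_sq hM)⟩

lemma l2Norm_filter_mul_le (hμ : 0 < μ) (hx : ∀ n, 1 ≤ x n) (hk : 1 ≤ k) (hK : 0 ≤ K)
    (hσ : ∀ n, 0 ≤ σ n) (hσK : ∀ n, σ n ≤ K * x n * s n ^ 2) (hg : ∀ n, g n = σ n * f n)
    (hw : Summable fun n => (x n ^ k * f n) ^ 2) (hwM : l2Norm (fun n => x n ^ k * f n) ≤ M) :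
    l2Norm (fun n => μ ^ 2 / (μ ^ 2 + s n ^ 2) * g n) ≤ K * M * μ ^ 2 := by
  have hKμ : 0 ≤ K * μ ^ 2 := by positivity
  calc l2Norm (fun n => μ ^ 2 / (μ ^ 2 + s n ^ 2) * g n)
      ≤ K * μ ^ 2 * l2Norm (fun n => x n ^ k * f n) :=
        l2Norm_le_mul_of_abs_le hKμ hw fun n => by
          rw [hg]; exact abs_filter_mul_le hμ (hx n) hk hK (hσ n) (hσK n) (f n)
    _ ≤ K * M * μ ^ 2 := by nlinarith

lemma abs_l2Norm_filter_sub_le (hr0 : ∀ n, 0 ≤ r n) (hr1 : ∀ n, r n ≤ 1)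
    (hgs : Summable fun n => g n ^ 2) (hgεs : Summable fun n => gε n ^ 2)
    (hds : Summable fun n => (g n - gε n) ^ 2) (hnoise : l2Norm (fun n => g n - gε n) ≤ ε) :
    |l2Norm (fun n => r n * g n) - l2Norm (fun n => r n * gε n)| ≤ ε := by
  have hr : ∀ y : ℕ → ℝ, Summable (fun n => y n ^ 2) → Summable fun n => (r n * y n) ^ 2 :=
    fun y hy => summable_sq_of_abs_le hy fun n => abs_mul_le_abs_of_le_one (hr0 n) (hr1 n) _
  have hcontract : ∀ n, |r n * (g n - gε n)| ≤ |g n - gε n| := fun n =>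
    abs_mul_le_abs_of_le_one (hr0 n) (hr1 n) _
  rw [abs_sub_le_iff]
  constructor
  · have := l2Norm_le_of_abs_le_add zero_le_one zero_le_one (hr gε hgεs) hds
      (a := fun n => r n * g n) fun n => by
        have := abs_add_le (r n * gε n) (r n * (g n - gε n))
        rw [← mul_add, add_sub_cancel] at this
        linarith [hcontract n]
    linarith
  · have := l2Norm_le_of_abs_le_add zero_le_one zero_le_one (hr g hgs) hds
      (a := fun n => r n * gε n) fun n => by
        have := abs_sub (r n * g n) (r n * (g n - gε n))
        rw [← mul_sub, sub_sub_cancel] at this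
        linarith [hcontract n]
    linarith

lemma le_div_of_mul_lt_l2Norm (hτ : 1 < τ) (hgs : Summable fun n => g n ^ 2)
    (hds : Summable fun n => (g n - gε n) ^ 2) (hgM : l2Norm g ≤ β * M)
    (hnoise : l2Norm (fun n => g n - gε n) ≤ ε) (hτε : τ * ε < l2Norm gε) :
    ε ≤ β * M / (τ - 1) := by
  have := l2Norm_le_of_abs_le_add zero_le_one zero_le_one hgs hds (a := gε) fun n => by
    have := abs_sub_abs_le_abs_sub (gε n) (g n)
    rw [abs_sub_comm] at this
    linarith
  rw [le_div_iff₀ (sub_pos.mpr hτ)]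
  linarith

lemma l2Norm_filter_le_mul_sqrt (hε : 0 < ε) (hb : 0 < b) (hk : 1 ≤ k) (hx : ∀ n, 0 < x n)
    (hσ : ∀ n, b / x n ≤ σ n) (hr0 : ∀ n, 0 ≤ r n) (hr1 : ∀ n, r n ≤ 1)
    (hg : ∀ n, g n = σ n * f n) (hrgs : Summable fun n => (r n * g n) ^ 2)
    (hrg : l2Norm (fun n => r n * g n) ≤ C * ε) (hw : Summable fun n => (x n ^ k * f n) ^ 2)
    (hwM : l2Norm (fun n => x n ^ k * f n) ≤ M) (hε₀ : ε ≤ ε₀) :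
    l2Norm (fun n => r n * f n) ≤ √(C ^ 2 + ε₀ ^ (k - 1) * M ^ 2 / (b ^ 2) ^ k) * √ε := by
  have hpt : ∀ n, (r n * f n) ^ 2
      ≤ (r n * g n) ^ 2 / ε + (ε / b ^ 2) ^ k * (x n ^ k * f n) ^ 2 := fun n =>
    hg n ▸ sq_mul_le_sq_div_add hε hb (hx n) (zero_le_one.trans hk) (hσ n) (hr0 n) (hr1 n) (f n)
  have hsum : Summable fun n => (r n * g n) ^ 2 / ε + (ε / b ^ 2) ^ k * (x n ^ k * f n) ^ 2 :=
    (hrgs.div_const ε).add (hw.mul_left _)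
  have hεk : (ε / b ^ 2) ^ k ≤ ε * (ε₀ ^ (k - 1) / (b ^ 2) ^ k) := by
    rw [div_rpow hε.le (sq_nonneg b), mul_div_assoc', div_le_div_iff_of_pos_right (by positivity)]
    calc ε ^ k = ε * ε ^ (k - 1) := by rw [← rpow_one_add' hε.le (by linarith), add_sub_cancel]
      _ ≤ ε * ε₀ ^ (k - 1) := by gcongr
  have hrg2 : ∑' n, (r n * g n) ^ 2 ≤ (C * ε) ^ 2 :=
    sq_l2Norm _ ▸ pow_le_pow_left₀ (l2Norm_nonneg _) hrg 2
  have hw2 : ∑' n, (x n ^ k * f n) ^ 2 ≤ M ^ 2 :=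
    sq_l2Norm _ ▸ pow_le_pow_left₀ (l2Norm_nonneg _) hwM 2
  rw [← sqrt_mul' _ hε.le]
  refine sqrt_le_sqrt ((hsum.of_nonneg_of_le (fun n => sq_nonneg _) hpt).tsum_le_tsum hpt hsum
    |>.trans ?_)
  rw [(hrgs.div_const ε).tsum_add (hw.mul_left _), tsum_div_const, tsum_mul_left]
  have h1 : (∑' n, (r n * g n) ^ 2) / ε ≤ C ^ 2 * ε := by
    rw [div_le_iff₀ hε]; linarith
  have h2 : (ε / b ^ 2) ^ k * ∑' n, (x n ^ k * f n) ^ 2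
      ≤ ε₀ ^ (k - 1) * M ^ 2 / (b ^ 2) ^ k * ε :=
    (mul_le_mul hεk hw2 (tsum_nonneg fun n => sq_nonneg _)
      (mul_nonneg hε.le (by have := hε.trans_le hε₀; positivity))).trans_eq (by ring)
  linarith

lemma l2Norm_sub_tikhonov_le_add (hμ : 0 < μ) (hσs : ∀ n, |σ n - s n| ≤ L * ε)
    (hg : ∀ n, g n = σ n * f n) (hfs : Summable fun n => f n ^ 2) (hfM : l2Norm f ≤ M)
    (hds : Summable fun n => (g n - gε n) ^ 2) (hnoise : l2Norm (fun n => g n - gε n) ≤ ε) :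
    l2Norm (fun n => f n - s n * gε n / (μ ^ 2 + s n ^ 2))
      ≤ l2Norm (fun n => μ ^ 2 / (μ ^ 2 + s n ^ 2) * f n) + (L * M + 1) * (ε / (2 * μ)) := by
  set q : ℕ → ℝ := fun n => s n / (μ ^ 2 + s n ^ 2) * ((s n - σ n) * f n + (g n - gε n))
  have hLε : 0 ≤ L * ε := (abs_nonneg _).trans (hσs 0)
  have hq : ∀ n, |q n| ≤ L * ε / (2 * μ) * |f n| + 1 / (2 * μ) * |g n - gε n| := fun n => by
    have hinner : |(s n - σ n) * f n + (g n - gε n)| ≤ L * ε * |f n| + |g n - gε n| := by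
      refine (abs_add_le _ _).trans (add_le_add ?_ le_rfl)
      rw [abs_mul, abs_sub_comm]
      exact mul_le_mul_of_nonneg_right (hσs n) (abs_nonneg _)
    calc |q n| ≤ 1 / (2 * μ) * (L * ε * |f n| + |g n - gε n|) := by
          rw [abs_mul]
          exact mul_le_mul (abs_div_sq_add_sq_le hμ _) hinner (abs_nonneg _) (by positivity)
      _ = _ := by ring
  have hqM : l2Norm q ≤ (L * M + 1) * (ε / (2 * μ)) := by
    calc l2Norm q ≤ L * ε / (2 * μ) * l2Norm f + 1 / (2 * μ) * l2Norm (fun n => g n - gε n) :=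
          l2Norm_le_of_abs_le_add (by positivity) (by positivity) hfs hds hq
      _ ≤ L * ε / (2 * μ) * M + 1 / (2 * μ) * ε := by gcongr
      _ = (L * M + 1) * (ε / (2 * μ)) := by ring
  have hrfs : Summable fun n => (μ ^ 2 / (μ ^ 2 + s n ^ 2) * f n) ^ 2 :=
    summable_sq_of_abs_le hfs fun n =>
      abs_mul_le_abs_of_le_one (sq_div_sq_add_sq_nonneg μ (s n)) (sq_div_sq_add_sq_le_one μ (s n)) _
  calc _ ≤ 1 * l2Norm (fun n => μ ^ 2 / (μ ^ 2 + s n ^ 2) * f n) + 1 * l2Norm q :=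
        l2Norm_le_of_abs_le_add zero_le_one zero_le_one hrfs
          (summable_sq_of_abs_le_add hfs hds hq) fun n => by
            rw [sub_mul_div_sq_add_sq_eq hμ.ne' (f n) (g n) (gε n) (hg n), one_mul, one_mul]
            exact abs_add_le _ _
    _ ≤ _ := by linarith

/-- The constant `Q` of the error bound; `β * M / (τ - 1)` bounds the admissible noise levels and
`(τ - 1) / (K * M) * ε ≤ μ ^ 2` under the discrepancy principle. -/
noncomputable def discrepancyErrorConst (τ k M K b β L : ℝ) : ℝ :=
  √((τ + 1) ^ 2 + (β * M / (τ - 1)) ^ (k - 1) * M ^ 2 / (b ^ 2) ^ k)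
    + (L * M + 1) / (2 * √((τ - 1) / (K * M)))

lemma discrepancyErrorConst_pos (hτ : 1 < τ) (hM : 0 ≤ M) (hβ : 0 ≤ β) (hL : 0 ≤ L)
    (k K b : ℝ) : 0 < discrepancyErrorConst τ k M K b β L := by
  have hτ1 : 0 < τ - 1 := sub_pos.mpr hτ
  have : 0 ≤ (β * M / (τ - 1)) ^ (k - 1) := by positivity
  exact add_pos_of_pos_of_nonneg (sqrt_pos.mpr (by positivity)) (by positivity)

theorem l2Norm_sub_tikhonov_le (hx : ∀ n, 1 ≤ x n) (hk : 1 ≤ k) (hM : 0 < M) (hK : 0 < K)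
    (hb : 0 < b) (hτ : 1 < τ) (hσb : ∀ n, b / x n ≤ σ n) (hσβ : ∀ n, σ n ≤ β)
    (hσK : ∀ n, σ n ≤ K * x n * s n ^ 2) (hσs : ∀ n, |σ n - s n| ≤ L * ε)
    (hfs : Summable fun n => x n ^ (2 * k) * f n ^ 2)
    (hfM : ∑' n, x n ^ (2 * k) * f n ^ 2 ≤ M ^ 2) (hg : ∀ n, g n = σ n * f n)
    (hgεs : Summable fun n => gε n ^ 2) (hnoise : l2Norm (fun n => g n - gε n) ≤ ε)
    (hε : 0 < ε) (hτε : τ * ε < l2Norm gε) (hμ : 0 < μ)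
    (hdisc : √(∑' n, (μ ^ 2 / (μ ^ 2 + s n ^ 2)) ^ 2 * gε n ^ 2) = τ * ε) :
    l2Norm (fun n => f n - s n * gε n / (μ ^ 2 + s n ^ 2))
      ≤ discrepancyErrorConst τ k M K b β L * √ε := by
  set r : ℕ → ℝ := fun n => μ ^ 2 / (μ ^ 2 + s n ^ 2)
  have hr0 : ∀ n, 0 ≤ r n := fun n => sq_div_sq_add_sq_nonneg μ (s n)
  have hr1 : ∀ n, r n ≤ 1 := fun n => sq_div_sq_add_sq_le_one μ (s n)
  have hx0 : ∀ n, 0 < x n := fun n => one_pos.trans_le (hx n)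
  have hσ0 : ∀ n, 0 ≤ σ n := fun n => (div_pos hb (hx0 n)).le.trans (hσb n)
  have hβ : 0 ≤ β := (hσ0 0).trans (hσβ 0)
  have hL : 0 ≤ L := nonneg_of_mul_nonneg_left ((abs_nonneg _).trans (hσs 0)) hε
  obtain ⟨hw, hwM⟩ := summable_and_l2Norm_rpow_mul_le (fun n => (hx0 n).le) hfs hfM hM.le
  have hfw : ∀ n, |f n| ≤ |x n ^ k * f n| := fun n => abs_le_abs_rpow_mul (hx n) (by linarith) _
  have hfs' := summable_sq_of_abs_le hw hfw
  have hgf : ∀ n, |g n| ≤ β * |f n| := fun n => by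
    rw [hg, abs_mul, abs_of_nonneg (hσ0 n)]
    exact mul_le_mul_of_nonneg_right (hσβ n) (abs_nonneg _)
  have hgs := summable_sq_of_abs_le_mul hfs' hgf
  have hds := summable_sq_sub hgs hgεs
  have hres := abs_l2Norm_filter_sub_le hr0 hr1 hgs hgεs hds hnoise
  rw [show l2Norm (fun n => r n * gε n) = τ * ε by simpa only [l2Norm, mul_pow] using hdisc,
    abs_sub_le_iff] at hres
  have hμ2 : (τ - 1) / (K * M) * ε ≤ μ ^ 2 := by
    have := l2Norm_filter_mul_le hμ hx hk hK.le hσ0 hσK hg hw hwM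
    rw [div_mul_eq_mul_div, div_le_iff₀ (by positivity)]
    nlinarith
  have hfM' : l2Norm f ≤ M := (l2Norm_le_of_abs_le hw hfw).trans hwM
  have hgM : l2Norm g ≤ β * M :=
    (l2Norm_le_mul_of_abs_le hβ hfs' hgf).trans (mul_le_mul_of_nonneg_left hfM' hβ)
  have hI := l2Norm_filter_le_mul_sqrt hε hb hk hx0 hσb hr0 hr1 hg (C := τ + 1)
    (summable_sq_of_abs_le hgs fun n => abs_mul_le_abs_of_le_one (hr0 n) (hr1 n) _)
    (by linarith) hw hwM (le_div_of_mul_lt_l2Norm hτ hgs hds hgM hnoise hτε)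
  have hII := mul_le_mul_of_nonneg_left (div_two_mul_le_of_mul_le_sq
    (div_pos (sub_pos.mpr hτ) (mul_pos hK hM)) hε.le hμ hμ2) (by positivity : 0 ≤ L * M + 1)
  calc _ ≤ l2Norm (fun n => r n * f n) + (L * M + 1) * (ε / (2 * μ)) :=
        l2Norm_sub_tikhonov_le_add hμ hσs hg hfs' hfM' hds hnoise
    _ ≤ _ := (add_le_add hI hII).trans_eq (by rw [discrepancyErrorConst]; ring)

end Regularization

theorem stmt_19_general
    (T D₁ D₂ B₁ B₂ C₁ C₂ : ℝ) (hT : 0 < T) (hD₁ : 0 < D₁) (hD₁₂ : D₁ ≤ D₂)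
    (hB₁ : 0 < B₁) (hB₁₂ : B₁ ≤ B₂) (hC₁ : 0 < C₁)
    (a φ φε : ℝ → ℝ) (ha : ContinuousOn a (Set.Icc 0 T))
    (hφc : ContinuousOn φ (Set.Icc 0 T)) (hφεc : ContinuousOn φε (Set.Icc 0 T))
    (haB : ∀ t ∈ Set.Icc 0 T, D₁ ≤ a t ∧ a t ≤ D₂)
    (hφB : ∀ t ∈ Set.Icc 0 T, B₁ ≤ φ t ∧ φ t ≤ B₂)
    (hφεB : ∀ t ∈ Set.Icc 0 T, C₁ ≤ φε t ∧ φε t ≤ C₂)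
    (A Bf : ℝ → ℝ) (hA : ∀ t, A t = ∫ s in (0:ℝ)..t, a s)
    (hBf : ∀ t, Bf t = A t - A T)
    (Φ : ℕ → (ℝ → ℝ) → ℝ)
    (hΦ : ∀ (n : ℕ) (h : ℝ → ℝ), Φ n h = ∫ t in (0:ℝ)..T, Real.exp ((n:ℝ)^2 * Bf t) * h t)
    (k M τ : ℝ) (hk : 1 < k) (hM : 0 < M) (hτ : 1 < τ) :
    ∃ Q : ℝ, 0 < Q ∧
      ∀ (f g gε : ℕ → ℝ) (ε μ : ℝ),
        Summable (fun n : ℕ => ((1:ℝ) + ((n:ℝ)+1)^2) ^ (2*k) * (f (n+1))^2) →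
        (∑' n : ℕ, ((1:ℝ) + ((n:ℝ)+1)^2) ^ (2*k) * (f (n+1))^2) ≤ M^2 →
        (∀ n : ℕ, g (n+1) = Φ (n+1) φ * f (n+1)) →
        Summable (fun n : ℕ => (gε (n+1))^2) →
        Real.sqrt (∑' n : ℕ, (g (n+1) - gε (n+1))^2) ≤ ε →
        Real.sqrt (∫ t in (0:ℝ)..T, (φ t - φε t)^2) ≤ ε →
        0 < τ * ε →
        τ * ε < Real.sqrt (∑' n : ℕ, (gε (n+1))^2) →
        0 < μ →
        Real.sqrt (∑' n : ℕ, (μ^2 / (μ^2 + (Φ (n+1) φε)^2))^2 * (gε (n+1))^2) = τ * ε →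
        Real.sqrt (∑' n : ℕ,
            (f (n+1) - Φ (n+1) φε * gε (n+1) / (μ^2 + (Φ (n+1) φε)^2))^2)
          ≤ Q * ε ^ ((1:ℝ)/2) := by
  have hD₂ : 0 ≤ D₂ := (hD₁.trans_le hD₁₂).le
  have hB₂ : 0 < B₂ := hB₁.trans_le hB₁₂
  obtain ⟨hBc, hB0, hBD⟩ := kernel_exponent_bounds (B := Bf) hT.le ha
    (fun t ht => hD₁.le.trans (haB t ht).1) (fun t ht => (haB t ht).2) fun t ht => by
      rw [hBf, hA, hA, integral_sub_integral_eq_integral_from_right ha ht]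
  set c := T * exp (-(D₂ * T))
  have hbounds : ∀ n : ℕ, B₁ * c / (1 + ((n:ℝ) + 1) ^ 2) ≤ Φ (n + 1) φ ∧ Φ (n + 1) φ ≤ B₂ * T ∧
      Φ (n + 1) φ ≤ B₂ / (C₁ ^ 2 * c) * (1 + ((n:ℝ) + 1) ^ 2) * Φ (n + 1) φε ^ 2 := fun n =>
    kernel_values_bounds hT hD₂ hB₁.le hB₂.le hC₁ hBc hB0 hBD hφc hφεc hφB
      (fun t ht => (hφεB t ht).1) (one_le_pow₀ (by simp)) (by push_cast; linarith) (hΦ _ _) (hΦ _ _)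
  refine ⟨discrepancyErrorConst τ k M (B₂ / (C₁ ^ 2 * c)) (B₁ * c) (B₂ * T) √T,
    discrepancyErrorConst_pos hτ hM.le (by positivity) (sqrt_nonneg T) _ _ _, ?_⟩
  intro f g gε ε μ hfs hfM hg hgεs hnoise hφnoise hτε hτεlt hμ hdisc
  have hε : 0 < ε := pos_of_mul_pos_right hτε (by linarith)
  rw [← sqrt_eq_rpow]
  refine l2Norm_sub_tikhonov_le (x := fun n => 1 + ((n:ℝ) + 1) ^ 2)
    (fun n => le_add_of_nonneg_right (sq_nonneg _)) hk.le hM (by positivity) (by positivity) hτ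
    (fun n => (hbounds n).1) (fun n => (hbounds n).2.1) (fun n => (hbounds n).2.2) (fun n => ?_)
    hfs hfM hg hgεs hnoise hε hτεlt hμ hdisc
  rw [hΦ, hΦ]
  exact abs_integral_mul_sub_integral_mul_le hT hε ((continuousOn_const.mul hBc).rexp)
    (fun _ _ => (exp_pos _).le)
    (fun t ht => exp_le_one_iff.mpr (mul_nonpos_of_nonneg_of_nonpos (by positivity) (hB0 t ht)))
    hφc hφεc hφnoise

/-- Theorem 8, case `k > 1`: with the a posteriori (discrepancy) choice
`ρ(μ) = τε`, there is a constant `Q > 0` depending only on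
`k, τ, M, T, B₁, B₂, C₁, C₂, D₁, D₂` such that `‖f − f_μ^ε‖ ≤ Q · ε^{1/2}`. -/
theorem stmt_19
    (T D₁ D₂ B₁ B₂ C₁ C₂ : ℝ) (hT : 0 < T) (hD₁ : 0 < D₁) (hD₁₂ : D₁ ≤ D₂)
    (hB₁ : 0 < B₁) (hB₁₂ : B₁ ≤ B₂) (hC₁ : 0 < C₁) (hC₁₂ : C₁ ≤ C₂)
    (a φ φε : ℝ → ℝ) (ha : ContinuousOn a (Set.Icc 0 T))
    (hφc : ContinuousOn φ (Set.Icc 0 T)) (hφεc : ContinuousOn φε (Set.Icc 0 T))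
    (haB : ∀ t ∈ Set.Icc 0 T, D₁ ≤ a t ∧ a t ≤ D₂)
    (hφB : ∀ t ∈ Set.Icc 0 T, B₁ ≤ φ t ∧ φ t ≤ B₂)
    (hφεB : ∀ t ∈ Set.Icc 0 T, C₁ ≤ φε t ∧ φε t ≤ C₂)
    (A Bf : ℝ → ℝ) (hA : ∀ t, A t = ∫ s in (0:ℝ)..t, a s)
    (hBf : ∀ t, Bf t = A t - A T)
    (Φ : ℕ → (ℝ → ℝ) → ℝ)
    (hΦ : ∀ (n : ℕ) (h : ℝ → ℝ), Φ n h = ∫ t in (0:ℝ)..T, Real.exp ((n:ℝ)^2 * Bf t) * h t)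
    (k M τ : ℝ) (hk : 1 < k) (hM : 0 < M) (hτ : 1 < τ) :
    ∃ Q : ℝ, 0 < Q ∧
      ∀ (f g gε : ℕ → ℝ) (ε μ : ℝ),
        Summable (fun n : ℕ => ((1:ℝ) + ((n:ℝ)+1)^2) ^ (2*k) * (f (n+1))^2) →
        (∑' n : ℕ, ((1:ℝ) + ((n:ℝ)+1)^2) ^ (2*k) * (f (n+1))^2) ≤ M^2 →
        (∀ n : ℕ, g (n+1) = Φ (n+1) φ * f (n+1)) →
        Summable (fun n : ℕ => (gε (n+1))^2) →
        Real.sqrt (∑' n : ℕ, (g (n+1) - gε (n+1))^2) ≤ ε →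
        Real.sqrt (∫ t in (0:ℝ)..T, (φ t - φε t)^2) ≤ ε →
        0 < τ * ε →
        τ * ε < Real.sqrt (∑' n : ℕ, (gε (n+1))^2) →
        0 < μ →
        Real.sqrt (∑' n : ℕ, (μ^2 / (μ^2 + (Φ (n+1) φε)^2))^2 * (gε (n+1))^2) = τ * ε →
        Real.sqrt (∑' n : ℕ,
            (f (n+1) - Φ (n+1) φε * gε (n+1) / (μ^2 + (Φ (n+1) φε)^2))^2)
          ≤ Q * ε ^ ((1:ℝ)/2) :=
  stmt_19_general T D₁ D₂ B₁ B₂ C₁ C₂ hT hD₁ hD₁₂ hB₁ hB₁₂ hC₁ a φ φε ha hφc hφεc haB hφB hφεB A Bf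
    hA hBf Φ hΦ k M τ hk hM hτ
end
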